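/- arXiv:1901.05701 — 7 statements merged into one kernel-verified Lean document; each statement's English description precedes it below -/
import Mathlib

section
/- The Williamson transform of the measure δ_x ▵_α δ_1 = x^α π_{2α} + (1−x^α) δ_1 (for 0 ≤ x ≤ 1) equals (1−(tx)^α)_+ · (1−t^α)_+ for all t ∈ [0,1], i.e. ∫ (1−(ts)^α)_+ d(δ_x ▵_α δ_1)(s) = (1−(tx)^α)_+(1−t^α)_+. -/
open scoped ENNReal NNReal
open MeasureTheory Set Real

/-- The Williamson transform of `δ_x ▵_α δ_1 = x^α π_{2α} + (1-x^α) δ_1` (for `0 ≤ x ≤ 1`)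
equals `(1-(tx)^α)_+ (1-t^α)_+` for all `t ∈ [0,1]`. -/
theorem williamson_kendall_pointmass (α x t : ℝ) (hα : 0 < α) (hx0 : 0 ≤ x) (hx1 : x ≤ 1)
    (ht0 : 0 ≤ t) (ht1 : t ≤ 1) :
    ∫ s, max (1 - (t * s) ^ α) 0 ∂(ENNReal.ofReal (x ^ α) •
          ((volume.restrict (Set.Ici (1 : ℝ))).withDensity
            fun s => ENNReal.ofReal (2 * α * s ^ (-2 * α - 1))) +
        ENNReal.ofReal (1 - x ^ α) • Measure.dirac (1 : ℝ)) =
      max (1 - (t * x) ^ α) 0 * max (1 - t ^ α) 0 := by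
  set f : ℝ → ℝ := fun s => max (1 - (t * s) ^ α) 0 with hfdef
  set w : ℝ → ℝ := fun s => 2 * α * s ^ (-2 * α - 1) with hwdef
  have hfc : Continuous f := by
    apply Continuous.max _ continuous_const
    exact continuous_const.sub ((continuous_const.mul continuous_id).rpow_const
      fun s => Or.inr hα.le)
  have hwm : Measurable w := by rw [hwdef]; fun_prop
  have hwmeas : Measurable fun s => (w s).toNNReal := hwm.real_toNNReal
  have hf0 : ∀ s, 0 ≤ f s := fun s => le_max_right _ _
  have hwpos : ∀ s ∈ Ici (1 : ℝ), 0 ≤ w s := by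
    intro s hs
    have hs0 : (0 : ℝ) < s := lt_of_lt_of_le one_pos hs
    have h1 : 0 ≤ s ^ (-2 * α - 1) := Real.rpow_nonneg hs0.le _
    have h2 : 0 ≤ 2 * α := by linarith
    rw [hwdef]; exact mul_nonneg h2 h1
  have hf1 : ∀ s ∈ Ici (1 : ℝ), f s ≤ 1 := by
    intro s hs
    have hs0 : (0 : ℝ) ≤ s := le_trans zero_le_one hs
    have : 0 ≤ (t * s) ^ α := Real.rpow_nonneg (mul_nonneg ht0 hs0) _
    exact max_le (by linarith) zero_le_one
  -- integrability of the dominating density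
  have hbound : IntegrableOn w (Ici (1 : ℝ)) volume := by
    rw [hwdef, integrableOn_Ici_iff_integrableOn_Ioi]
    exact (integrableOn_Ioi_rpow_of_lt (by linarith) one_pos).const_mul _
  have hprodInt : IntegrableOn (fun s => w s * f s) (Ici (1 : ℝ)) volume := by
    apply hbound.mono' (hwm.mul hfc.measurable).aestronglyMeasurable
    filter_upwards [ae_restrict_mem measurableSet_Ici] with s hs
    have h0 := hwpos s hs
    have := hf0 s
    have := hf1 s hs
    rw [Real.norm_eq_abs, Pi.mul_apply, abs_of_nonneg (mul_nonneg h0 (hf0 s))]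
    nlinarith
  -- the Pareto factor measure
  set μ1 : Measure ℝ := (volume.restrict (Set.Ici (1 : ℝ))).withDensity
      fun s => ENNReal.ofReal (w s) with hμ1def
  have hof : (fun s => ENNReal.ofReal (w s)) = fun s => ((w s).toNNReal : ℝ≥0∞) := rfl
  have hInt1 : Integrable f μ1 := by
    rw [hμ1def, hof, integrable_withDensity_iff_integrable_smul hwmeas]
    apply hprodInt.congr
    filter_upwards [ae_restrict_mem measurableSet_Ici] with s hs
    rw [NNReal.smul_def, Real.coe_toNNReal _ (hwpos s hs), smul_eq_mul]
  have hid : Integrable f (Measure.dirac (1 : ℝ)) := by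
    refine ⟨hfc.aestronglyMeasurable, ?_⟩
    simp [HasFiniteIntegral, lintegral_dirac]
  -- rewrite integral w.r.t. density as a set integral
  have hμ1int : ∫ s, f s ∂μ1 = ∫ s in Ici (1 : ℝ), w s * f s := by
    rw [hμ1def, hof, integral_withDensity_eq_integral_smul hwmeas f]
    refine setIntegral_congr_fun measurableSet_Ici fun s hs => ?_
    rw [NNReal.smul_def, Real.coe_toNNReal _ (hwpos s hs), smul_eq_mul]
  -- the main computation of the Pareto part
  have key : ∫ s in Ici (1 : ℝ), w s * f s = (1 - t ^ α) ^ 2 := by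
    rcases eq_or_lt_of_le ht0 with h0 | htpos
    · -- t = 0
      have hfone : ∀ s, f s = 1 := by
        intro s
        rw [hfdef]
        simp [← h0, Real.zero_rpow hα.ne']
      have htα : t ^ α = 0 := by rw [← h0, Real.zero_rpow hα.ne']
      simp only [hfone, mul_one, htα, sub_zero, one_pow]
      rw [hwdef, integral_Ici_eq_integral_Ioi, integral_const_mul,
        integral_Ioi_rpow_of_lt (by linarith) one_pos, Real.one_rpow]
      field_simp
      ring
    · -- 0 < t
      have h1t : (1 : ℝ) ≤ 1 / t := by rw [le_div_iff₀ htpos]; linarith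
      have hsplit : Ici (1 : ℝ) = Ico 1 (1 / t) ∪ Ici (1 / t) :=
        (Ico_union_Ici_eq_Ici h1t).symm
      have hdisj : Disjoint (Ico (1 : ℝ) (1 / t)) (Ici (1 / t)) := by
        rw [Set.disjoint_left]
        rintro s ⟨_, h2⟩ h3
        exact absurd h3 (not_le.mpr h2)
      rw [hsplit, setIntegral_union hdisj measurableSet_Ici
        (hprodInt.mono_set (by rw [hsplit]; exact subset_union_left))
        (hprodInt.mono_set (by rw [hsplit]; exact subset_union_right))]
      have h2 : ∫ s in Ici (1 / t), w s * f s = 0 := by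
        apply setIntegral_eq_zero_of_forall_eq_zero
        intro s hs
        have hst : 1 ≤ s * t := (div_le_iff₀ htpos).mp hs
        have h1 : 1 ≤ (t * s) ^ α := Real.one_le_rpow (by linarith [mul_comm s t]) hα.le
        have : f s = 0 := max_eq_right (by linarith)
        rw [this, mul_zero]
      rw [h2, add_zero]
      have hcong : ∫ s in Ico (1 : ℝ) (1 / t), w s * f s
          = ∫ s in Ico (1 : ℝ) (1 / t),
              (2 * α * s ^ (-2 * α - 1) - 2 * α * t ^ α * s ^ (-α - 1)) := by
        refine setIntegral_congr_fun measurableSet_Ico fun s hs => ?_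
        obtain ⟨hs1, hs2⟩ := hs
        have hspos : (0 : ℝ) < s := lt_of_lt_of_le one_pos hs1
        have hts : s * t < 1 := (lt_div_iff₀ htpos).mp hs2
        have hmax : f s = 1 - (t * s) ^ α := by
          apply max_eq_left
          have := Real.rpow_lt_one (mul_nonneg ht0 hspos.le)
            (by linarith [mul_comm s t]) hα
          linarith
        have hpow : s ^ α * s ^ (-2 * α - 1) = s ^ (-α - 1) := by
          rw [← Real.rpow_add hspos]; ring_nf
        rw [hmax, Real.mul_rpow ht0 hspos.le, hwdef]
        calc 2 * α * s ^ (-2 * α - 1) * (1 - t ^ α * s ^ α)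
            = 2 * α * s ^ (-2 * α - 1)
              - 2 * α * t ^ α * (s ^ α * s ^ (-2 * α - 1)) := by ring
          _ = 2 * α * s ^ (-2 * α - 1) - 2 * α * t ^ α * s ^ (-α - 1) := by rw [hpow]
      rw [hcong, integral_Ico_eq_integral_Ioo, ← integral_Ioc_eq_integral_Ioo,
        ← intervalIntegral.integral_of_le h1t]
      have hderiv : ∀ s ∈ uIcc (1 : ℝ) (1 / t),
          HasDerivAt (fun s : ℝ => -s ^ (-2 * α) + 2 * t ^ α * s ^ (-α))
            (2 * α * s ^ (-2 * α - 1) - 2 * α * t ^ α * s ^ (-α - 1)) s := by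
        intro s hs
        rw [uIcc_of_le h1t] at hs
        have hspos : (0 : ℝ) < s := lt_of_lt_of_le one_pos hs.1
        have d1 := (Real.hasDerivAt_rpow_const (x := s) (p := -2 * α)
          (Or.inl hspos.ne')).neg
        have d2 := (Real.hasDerivAt_rpow_const (x := s) (p := -α)
          (Or.inl hspos.ne')).const_mul (2 * t ^ α)
        exact (d1.add d2).congr_deriv (by ring)
      have hcont : IntervalIntegrable
          (fun s : ℝ => 2 * α * s ^ (-2 * α - 1) - 2 * α * t ^ α * s ^ (-α - 1))
          volume 1 (1 / t) := by
        apply ContinuousOn.intervalIntegrable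
        have hne : ∀ s ∈ uIcc (1 : ℝ) (1 / t), s ≠ 0 := by
          intro s hs
          rw [uIcc_of_le h1t] at hs
          exact (lt_of_lt_of_le one_pos hs.1).ne'
        exact (continuousOn_const.mul (continuousOn_id.rpow_const
            fun s hs => Or.inl (hne s hs))).sub
          (continuousOn_const.mul (continuousOn_id.rpow_const
            fun s hs => Or.inl (hne s hs)))
      rw [intervalIntegral.integral_eq_sub_of_hasDerivAt hderiv hcont]
      have hA : (1 / t) ^ (-α : ℝ) = t ^ α := by
        rw [one_div, Real.inv_rpow ht0, Real.rpow_neg ht0, inv_inv]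
      have hB : (1 / t) ^ (-2 * α : ℝ) = t ^ α * t ^ α := by
        rw [one_div, Real.inv_rpow ht0, show (-2 * α : ℝ) = -(2 * α) by ring,
          Real.rpow_neg ht0, inv_inv, show (2 * α : ℝ) = α + α by ring,
          Real.rpow_add htpos]
      rw [hA, hB, Real.one_rpow, Real.one_rpow]
      ring
  -- put the pieces together
  rw [integral_add_measure (hInt1.smul_measure ENNReal.ofReal_ne_top)
      (hid.smul_measure ENNReal.ofReal_ne_top),
    integral_smul_measure, integral_smul_measure, integral_dirac f 1, hμ1int, key,
    ENNReal.toReal_ofReal (Real.rpow_nonneg hx0 α),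
    ENNReal.toReal_ofReal (by
      have : x ^ α ≤ 1 := Real.rpow_le_one hx0 hx1 hα.le
      linarith)]
  have hfone1 : f 1 = 1 - t ^ α := by
    rw [hfdef]
    simp only [mul_one]
    exact max_eq_left (by have := Real.rpow_le_one ht0 ht1 hα.le; linarith)
  have htxα : (t * x) ^ α = t ^ α * x ^ α := Real.mul_rpow ht0 hx0
  have hmax1 : max (1 - (t * x) ^ α) 0 = 1 - (t * x) ^ α :=
    max_eq_left (by
      have := Real.rpow_le_one (mul_nonneg ht0 hx0)
        (mul_le_one₀ ht1 hx0 hx1) hα.le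
      linarith)
  have hmax2 : max (1 - t ^ α) 0 = 1 - t ^ α :=
    max_eq_left (by have := Real.rpow_le_one ht0 ht1 hα.le; linarith)
  rw [hfone1, hmax1, hmax2, htxα, smul_eq_mul, smul_eq_mul]
  ring
end

section
/- For any probability measure μ on [0,∞) with c.d.f. F and any t > 0, the Williamson transform satisfies Φ_μ(t) = α t^α ∫_0^{1/t} s^{α−1} F(s) ds. -/
open MeasureTheory

/-- For a probability measure `μ` on `[0,∞)` with c.d.f. `F` and `t > 0`, the Williamson
transform satisfies `Φ_μ(t) = α t^α ∫_0^{1/t} s^{α-1} F(s) ds`. -/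
theorem williamson_eq_cdf_integral (α : ℝ) (hα : 0 < α) (μ : Measure ℝ)
    [IsProbabilityMeasure μ] (hμ : μ (Set.Iio 0) = 0) (t : ℝ) (ht : 0 < t) :
    ∫ s, max (1 - (t * s) ^ α) 0 ∂μ =
      α * t ^ α * ∫ s in Set.Ioc 0 (1 / t), s ^ (α - 1) * (μ (Set.Iic s)).toReal := by
  have ht' : (0:ℝ) < 1 / t := by positivity
  have htα : (0:ℝ) < α * t ^ α := by positivity
  have hg : Measurable fun u : ℝ => u ^ (α - 1) := by measurability
  -- integrability of u ↦ u^(α-1) on Ioc 0 (1/t)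
  have hgint : IntegrableOn (fun u : ℝ => u ^ (α - 1)) (Set.Ioc 0 (1 / t)) :=
    (intervalIntegrable_iff_integrableOn_Ioc_of_le ht'.le).mp
      (intervalIntegral.intervalIntegrable_rpow' (by linarith))
  -- Step A : pointwise identity for s ≥ 0
  have hA : ∀ s : ℝ, 0 ≤ s → max (1 - (t * s) ^ α) 0
      = (α * t ^ α) * ∫ u in Set.Ioc 0 (1 / t),
          (Set.Ici s).indicator (fun u => u ^ (α - 1)) u := by
    intro s hs
    have hset : (Set.Ici s ∩ Set.Ioc 0 (1 / t) : Set ℝ) =ᵐ[volume] Set.Ioc s (1 / t) := by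
      have hsub : symmDiff (Set.Ici s ∩ Set.Ioc 0 (1 / t)) (Set.Ioc s (1 / t)) ⊆ {s} := by
        intro u hu
        rcases hu with hu | hu
        · rcases hu with ⟨⟨h1, h2, h3⟩, h4⟩
          have : ¬ s < u := fun h => h4 ⟨h, h3⟩
          simpa using le_antisymm (not_lt.mp this) h1
        · rcases hu with ⟨⟨h1, h2⟩, h4⟩
          exact absurd ⟨h1.le, lt_of_le_of_lt hs h1, h2⟩ h4
      rw [MeasureTheory.ae_eq_set]
      constructor
      · exact measure_mono_null (fun u hu => hsub (Or.inl hu)) (by simp)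
      · exact measure_mono_null (fun u hu => hsub (Or.inr hu)) (by simp)
    have h1 : ∫ u in Set.Ioc 0 (1 / t),
        (Set.Ici s).indicator (fun u => u ^ (α - 1)) u
        = ∫ u in Set.Ioc s (1 / t), u ^ (α - 1) := by
      rw [MeasureTheory.integral_indicator measurableSet_Ici,
        MeasureTheory.Measure.restrict_restrict measurableSet_Ici]
      exact setIntegral_congr_set hset
    rw [h1]
    rcases le_or_gt s (1 / t) with hst | hst
    · have h2 : ∫ u in Set.Ioc s (1 / t), u ^ (α - 1)
          = ((1 / t) ^ α - s ^ α) / α := by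
        rw [← intervalIntegral.integral_of_le hst,
          integral_rpow (Or.inl (by linarith))]
        norm_num
      have hts1 : t * s ≤ 1 := by
        have := mul_le_mul_of_nonneg_left hst ht.le
        rwa [mul_one_div_cancel ht.ne'] at this
      have hpow1 : (t * s) ^ α ≤ 1 :=
        Real.rpow_le_one (mul_nonneg ht.le hs) hts1 hα.le
      have e1 : t ^ α * (1 / t) ^ α = 1 := by
        rw [← Real.mul_rpow ht.le (by positivity), mul_one_div_cancel ht.ne',
          Real.one_rpow]
      have e2 : t ^ α * s ^ α = (t * s) ^ α := (Real.mul_rpow ht.le hs).symm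
      rw [h2, max_eq_left (by linarith)]
      field_simp
      nlinarith [e1, e2]
    · have h2 : Set.Ioc s (1 / t) = ∅ := Set.Ioc_eq_empty (not_lt.mpr hst.le)
      have hts1 : 1 ≤ t * s := by
        have := mul_le_mul_of_nonneg_left hst.le ht.le
        rwa [mul_one_div_cancel ht.ne'] at this
      have hpow1 : 1 ≤ (t * s) ^ α := Real.one_le_rpow hts1 hα.le
      rw [h2, max_eq_right (by linarith)]
      simp
  -- Two-variable kernel
  set K : ℝ × ℝ → ENNReal := fun p =>
    ENNReal.ofReal (p.2 ^ (α - 1)) * Set.indicator {q : ℝ × ℝ | q.1 ≤ q.2} 1 p with hK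
  have hKmeas : Measurable K := by
    apply Measurable.mul
    · exact (hg.comp measurable_snd).ennreal_ofReal
    · exact measurable_const.indicator (measurableSet_le measurable_fst measurable_snd)
  -- Step B : the pointwise identity in ENNReal form
  have hB : ∀ s : ℝ, 0 ≤ s → ENNReal.ofReal (max (1 - (t * s) ^ α) 0)
      = ENNReal.ofReal (α * t ^ α) * ∫⁻ u in Set.Ioc 0 (1 / t), K (s, u) := by
    intro s hs
    rw [hA s hs, ENNReal.ofReal_mul htα.le]
    congr 1
    rw [MeasureTheory.ofReal_integral_eq_lintegral_ofReal
      (hgint.indicator measurableSet_Ici)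
      ((ae_restrict_iff' measurableSet_Ioc).2 (Filter.Eventually.of_forall
        (fun u hu => Set.indicator_apply_nonneg
          (fun _ => Real.rpow_nonneg hu.1.le _))))]
    refine lintegral_congr fun u => ?_
    by_cases h : s ≤ u <;>
      simp [hK, Set.indicator_apply, h, mul_comm]
  -- a.e. nonnegativity of s under μ
  have haes : ∀ᵐ s ∂μ, 0 ≤ s := by
    rw [MeasureTheory.ae_iff]
    convert hμ using 2
    ext s; simp
  -- measurability of the cdf
  have hFmeas : Measurable fun u : ℝ => (μ (Set.Iic u)).toReal := by
    apply Monotone.measurable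
    intro a b hab
    exact ENNReal.toReal_mono (measure_ne_top μ _)
      (measure_mono (Set.Iic_subset_Iic.2 hab))
  -- LHS as a lintegral
  have hcont : Continuous fun s : ℝ => max (1 - (t * s) ^ α) 0 := by
    apply Continuous.max _ continuous_const
    exact continuous_const.sub
      ((continuous_const.mul continuous_id).rpow_const (fun x => Or.inr hα.le))
  have hLHS : ∫ s, max (1 - (t * s) ^ α) 0 ∂μ
      = (∫⁻ s, ENNReal.ofReal (max (1 - (t * s) ^ α) 0) ∂μ).toReal :=
    integral_eq_lintegral_of_nonneg_ae
      (Filter.Eventually.of_forall fun s => le_max_right _ _)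
      hcont.aestronglyMeasurable
  -- RHS as a lintegral
  have hRHS : ∫ s in Set.Ioc 0 (1 / t), s ^ (α - 1) * (μ (Set.Iic s)).toReal
      = (∫⁻ u in Set.Ioc 0 (1 / t),
          ENNReal.ofReal (u ^ (α - 1)) * μ (Set.Iic u)).toReal := by
    rw [integral_eq_lintegral_of_nonneg_ae
      ((ae_restrict_iff' measurableSet_Ioc).2 (Filter.Eventually.of_forall
        (fun u hu => mul_nonneg (Real.rpow_nonneg hu.1.le _) ENNReal.toReal_nonneg)))
      ((hg.mul hFmeas).aestronglyMeasurable)]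
    congr 1
    refine setLIntegral_congr_fun measurableSet_Ioc
      (fun u hu => ?_)
    rw [ENNReal.ofReal_mul (Real.rpow_nonneg hu.1.le _),
      ENNReal.ofReal_toReal (measure_ne_top μ _)]
  -- the main lintegral computation
  have hmain : ∫⁻ s, ENNReal.ofReal (max (1 - (t * s) ^ α) 0) ∂μ
      = ENNReal.ofReal (α * t ^ α)
        * ∫⁻ u in Set.Ioc 0 (1 / t), ENNReal.ofReal (u ^ (α - 1)) * μ (Set.Iic u) := by
    have step1 : ∫⁻ s, ENNReal.ofReal (max (1 - (t * s) ^ α) 0) ∂μ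
        = ∫⁻ s, (ENNReal.ofReal (α * t ^ α)
            * ∫⁻ u in Set.Ioc 0 (1 / t), K (s, u)) ∂μ :=
      lintegral_congr_ae (haes.mono fun s hs => hB s hs)
    rw [step1, lintegral_const_mul' _ _ ENNReal.ofReal_ne_top]
    congr 1
    have swap : ∫⁻ s, (∫⁻ u in Set.Ioc 0 (1 / t), K (s, u)) ∂μ
        = ∫⁻ u in Set.Ioc 0 (1 / t), ∫⁻ s, K (s, u) ∂μ := by
      refine lintegral_lintegral_swap ?_
      have heq : (Function.uncurry fun s u => K (s, u)) = K := rfl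
      rw [heq]; exact hKmeas.aemeasurable
    rw [swap]
    refine lintegral_congr fun u => ?_
    have : ∀ s : ℝ, K (s, u)
        = (Set.Iic u).indicator (fun _ => ENNReal.ofReal (u ^ (α - 1))) s := by
      intro s
      by_cases h : s ≤ u <;> simp [hK, Set.indicator_apply, h]
    simp_rw [this]
    rw [lintegral_indicator measurableSet_Iic, setLIntegral_const]
  rw [hLHS, hRHS, hmain, ENNReal.toReal_mul, ENNReal.toReal_ofReal htα.le]
end

section
/- Inversion formula for the Williamson transform: if μ is a probability measure on [0,∞) with c.d.f. F, and H(t) := Φ_μ(1/t) where Φ_μ(t) = ∫(1−(ts)^α)_+ dF(s), then for every t > 0 at which H is differentiable and F is continuous, F(t) = H(t) + α^{−1} t H'(t). -/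
open MeasureTheory

private lemma williamson_kernel_lt {α s u : ℝ} (hα : 0 < α) (hs : 0 ≤ s) (hu : 0 < u)
    (h : s < u) : max (1 - (s / u) ^ α) 0 = 1 - s ^ α * u ^ (-α) := by
  rw [max_eq_left, Real.div_rpow hs hu.le, Real.rpow_neg hu.le, div_eq_mul_inv]
  have h1 : (s / u) ^ α < 1 :=
    Real.rpow_lt_one (div_nonneg hs hu.le) ((div_lt_one hu).mpr h) hα
  linarith

private lemma williamson_kernel_gt {α s u : ℝ} (hα : 0 < α) (hu : 0 < u)
    (h : u < s) : max (1 - (s / u) ^ α) 0 = 0 := by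
  apply max_eq_right
  have h1 : 1 < (s / u) ^ α :=
    (Real.one_lt_rpow_iff_of_pos (div_pos (hu.trans h) hu)).mpr
      (Or.inl ⟨(one_lt_div hu).mpr h, hα⟩)
  linarith

/-- Inversion formula for the Williamson transform: if `H(t) = Φ_μ(1/t)`, then at every
`t > 0` where `H` is differentiable and the c.d.f. `F` is continuous,
`F(t) = H(t) + α⁻¹ t H'(t)`. -/
theorem williamson_inversion (α : ℝ) (hα : 0 < α) (μ : Measure ℝ) [IsProbabilityMeasure μ]
    (hμ : μ (Set.Iio 0) = 0) (F H : ℝ → ℝ)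
    (hF : ∀ s, F s = (μ (Set.Iic s)).toReal)
    (hH : ∀ t, H t = ∫ s, max (1 - (s / t) ^ α) 0 ∂μ)
    (t H' : ℝ) (ht : 0 < t) (hd : HasDerivAt H H' t) (hc : ContinuousAt F t) :
    F t = H t + α⁻¹ * t * H' := by
  have hαne : α ≠ 0 := ne_of_gt hα
  -- almost every point is nonnegative
  have hae0 : ∀ᵐ s ∂μ, 0 ≤ s := by
    rw [MeasureTheory.ae_iff]
    convert hμ using 2
    ext s; simp [not_le, Set.mem_Iio]
  -- left limit of F at t
  have hxlim : Filter.Tendsto (fun n : ℕ => t - 1 / (n + 1)) Filter.atTop (nhds t) := by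
    have h0 : Filter.Tendsto (fun n : ℕ => 1 / ((n : ℝ) + 1)) Filter.atTop (nhds 0) :=
      tendsto_one_div_add_atTop_nhds_zero_nat
    have := (tendsto_const_nhds (x := t) (f := Filter.atTop (α := ℕ))).sub h0
    simpa using this
  have hmono : Monotone (fun n : ℕ => Set.Iic (t - 1 / ((n : ℝ) + 1))) := by
    intro m n hmn
    apply Set.Iic_subset_Iic.mpr
    have hm1 : (0:ℝ) < (m : ℝ) + 1 := by positivity
    have hcast : (m : ℝ) + 1 ≤ (n : ℝ) + 1 := by
      have : (m : ℝ) ≤ n := Nat.cast_le.mpr hmn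
      linarith
    have : (1:ℝ) / ((n : ℝ) + 1) ≤ 1 / ((m : ℝ) + 1) :=
      one_div_le_one_div_of_le hm1 hcast
    linarith
  have hunion : (⋃ n : ℕ, Set.Iic (t - 1 / ((n : ℝ) + 1))) = Set.Iio t := by
    ext s
    simp only [Set.mem_iUnion, Set.mem_Iic, Set.mem_Iio]
    constructor
    · rintro ⟨n, hn⟩
      have : (0:ℝ) < 1 / ((n : ℝ) + 1) := by positivity
      linarith
    · intro hs
      obtain ⟨n, hn⟩ := exists_nat_one_div_lt (show (0:ℝ) < t - s by linarith)
      exact ⟨n, by linarith⟩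
  have hmeas_lim : Filter.Tendsto (fun n : ℕ => μ (Set.Iic (t - 1 / ((n : ℝ) + 1))))
      Filter.atTop (nhds (μ (Set.Iio t))) := by
    rw [← hunion]
    exact tendsto_measure_iUnion_atTop hmono
  have h2 : Filter.Tendsto (fun n : ℕ => F (t - 1 / ((n : ℝ) + 1))) Filter.atTop
      (nhds ((μ (Set.Iio t)).toReal)) := by
    have h := (ENNReal.tendsto_toReal (measure_ne_top μ (Set.Iio t))).comp hmeas_lim
    refine h.congr fun n => ?_
    exact (hF _).symm
  have h3 : Filter.Tendsto (fun n : ℕ => F (t - 1 / ((n : ℝ) + 1))) Filter.atTop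
      (nhds (F t)) := hc.tendsto.comp hxlim
  have hFt : F t = (μ (Set.Iio t)).toReal := tendsto_nhds_unique h3 h2
  have hIicIio : μ (Set.Iic t) = μ (Set.Iio t) := by
    have h := (hFt.symm.trans (hF t))
    exact ((ENNReal.toReal_eq_toReal_iff' (measure_ne_top _ _) (measure_ne_top _ _)).mp h).symm
  have hμt : μ {t} = 0 := by
    have hd' : Disjoint (Set.Iio t) {t} := by simp [Set.disjoint_singleton_right]
    have hm := measure_union (μ := μ) hd' (measurableSet_singleton t)
    rw [Set.Iio_union_right, hIicIio] at hm
    nth_rewrite 1 [← add_zero (μ (Set.Iio t))] at hm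
    exact ((ENNReal.add_right_inj (measure_ne_top _ _)).mp hm).symm
  have haet : ∀ᵐ s ∂μ, s ≠ t := by
    rw [MeasureTheory.ae_iff]
    convert hμt using 2
    ext s; simp
  -- measurability and integrability
  have hmeas_pow : Measurable fun s : ℝ => s ^ α := measurable_id.pow_const α
  have hmeasK : ∀ u : ℝ, MeasureTheory.AEStronglyMeasurable
      (fun s => max (1 - (s / u) ^ α) 0) μ := fun u =>
    (((measurable_id.div_const u).pow_const α).const_sub 1).max measurable_const
      |>.aestronglyMeasurable
  have hGint : MeasureTheory.Integrable
      (fun s => Set.indicator (Set.Iio t) (fun s => s ^ α) s) μ := by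
    refine MeasureTheory.Integrable.mono' (integrable_const (t ^ α))
      ((hmeas_pow.indicator measurableSet_Iio).aestronglyMeasurable) ?_
    filter_upwards [hae0] with s hs
    rw [Real.norm_eq_abs]
    by_cases h : s ∈ Set.Iio t
    · rw [Set.indicator_of_mem h, abs_of_nonneg (Real.rpow_nonneg hs α)]
      exact Real.rpow_le_rpow hs (le_of_lt h) hα.le
    · rw [Set.indicator_of_notMem h]
      simpa using Real.rpow_nonneg ht.le α
  set G : ℝ := ∫ s, Set.indicator (Set.Iio t) (fun s => s ^ α) s ∂μ with hG
  set C : ℝ := α * (2 * t) ^ α * (t / 2) ^ (-α - 1) with hC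
  have ht2 : (0:ℝ) < t / 2 := half_pos ht
  have hball : Metric.ball t (t / 2) ⊆ Set.Ioi (t / 2) := by
    intro u hu
    rw [Metric.mem_ball, Real.dist_eq, abs_lt] at hu
    simp only [Set.mem_Ioi]
    linarith [hu.1]
  -- integrability of the kernel at t
  have hint_t : MeasureTheory.Integrable (fun s => max (1 - (s / t) ^ α) 0) μ := by
    refine MeasureTheory.Integrable.mono' (integrable_const 1) (hmeasK t) ?_
    filter_upwards [hae0] with s hs
    rw [Real.norm_eq_abs, abs_of_nonneg (le_max_right _ _)]
    refine max_le ?_ zero_le_one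
    have := Real.rpow_nonneg (div_nonneg hs ht.le) α
    linarith
  -- Lipschitz bound
  have hlip : ∀ᵐ s ∂μ, LipschitzOnWith (Real.nnabs C)
      (fun u => max (1 - (s / u) ^ α) 0) (Metric.ball t (t / 2)) := by
    filter_upwards [hae0] with s hs
    apply LipschitzOnWith.of_dist_le_mul
    intro u hu v hv
    have hu' : t / 2 < u := hball hu
    have hv' : t / 2 < v := hball hv
    have hu0 : 0 < u := ht2.trans hu'
    have hv0 : 0 < v := ht2.trans hv'
    rw [Real.dist_eq, Real.dist_eq, Real.coe_nnabs]
    by_cases hcase : s < 2 * t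
    · have key2 : ∀ w ∈ Set.Ioi (t / 2),
          HasDerivWithinAt (fun w => 1 - s ^ α * w ^ (-α))
            (-(s ^ α * (-α * w ^ (-α - 1)))) (Set.Ioi (t / 2)) w := by
        intro w hw
        have hw0 : 0 < w := ht2.trans hw
        exact (HasDerivAt.const_sub 1 (HasDerivAt.const_mul (s ^ α)
          (Real.hasDerivAt_rpow_const (p := -α) (Or.inl hw0.ne')))).hasDerivWithinAt
      have hbound : ∀ w ∈ Set.Ioi (t / 2),
          ‖-(s ^ α * (-α * w ^ (-α - 1)))‖ ≤ C := by
        intro w hw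
        have hw0 : 0 < w := ht2.trans hw
        rw [Real.norm_eq_abs, show -(s ^ α * (-α * w ^ (-α - 1))) = α * (s ^ α * w ^ (-α - 1)) by ring,
          abs_of_nonneg (by positivity)]
        have h1 : s ^ α ≤ (2 * t) ^ α := Real.rpow_le_rpow hs hcase.le hα.le
        have h2 : w ^ (-α - 1) ≤ (t / 2) ^ (-α - 1) :=
          Real.rpow_le_rpow_of_nonpos ht2 (le_of_lt hw) (by linarith)
        calc α * (s ^ α * w ^ (-α - 1))
            ≤ α * ((2 * t) ^ α * (t / 2) ^ (-α - 1)) := by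
              refine mul_le_mul_of_nonneg_left ?_ hα.le
              exact mul_le_mul h1 h2 (by positivity) (by positivity)
          _ = C := by rw [hC]; ring
      have hmvt := (convex_Ioi (t / 2)).norm_image_sub_le_of_norm_hasDerivWithin_le
        key2 hbound (hball hv) (hball hu)
      have hrw : ∀ w : ℝ, 0 < w → (s / w) ^ α = s ^ α * w ^ (-α) := fun w hw => by
        rw [Real.div_rpow hs hw.le, Real.rpow_neg hw.le, div_eq_mul_inv]
      rw [hrw u hu0, hrw v hv0]
      calc |max (1 - s ^ α * u ^ (-α)) 0 - max (1 - s ^ α * v ^ (-α)) 0|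
          ≤ |(1 - s ^ α * u ^ (-α)) - (1 - s ^ α * v ^ (-α))| := abs_max_sub_max_le_abs _ _ _
        _ ≤ C * ‖u - v‖ := hmvt
        _ ≤ |C| * |u - v| := by
            rw [Real.norm_eq_abs]
            exact mul_le_mul_of_nonneg_right (le_abs_self C) (abs_nonneg _)
    · push_neg at hcase
      have hz : ∀ w, w ∈ Metric.ball t (t / 2) → max (1 - (s / w) ^ α) 0 = 0 := by
        intro w hw
        have hw' : t / 2 < w := hball hw
        have hwlt : w < s := by
          rw [Metric.mem_ball, Real.dist_eq, abs_lt] at hw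
          linarith [hw.2]
        exact williamson_kernel_gt hα (ht2.trans hw') hwlt
      rw [hz u hu, hz v hv]
      simp only [sub_zero, abs_zero]
      positivity
  -- pointwise differentiability
  have hdiff : ∀ᵐ s ∂μ, HasDerivAt (fun u => max (1 - (s / u) ^ α) 0)
      (Set.indicator (Set.Iio t) (fun s => s ^ α * (α * t ^ (-α - 1))) s) t := by
    filter_upwards [hae0, haet] with s hs hst
    rcases lt_or_gt_of_ne hst with hlt | hgt
    · rw [Set.indicator_of_mem (Set.mem_Iio.mpr hlt)]
      have hder : HasDerivAt (fun u => 1 - s ^ α * u ^ (-α))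
          (-(s ^ α * (-α * t ^ (-α - 1)))) t :=
        HasDerivAt.const_sub 1 (HasDerivAt.const_mul (s ^ α)
          (Real.hasDerivAt_rpow_const (p := -α) (Or.inl ht.ne')))
      have hev : (fun u => max (1 - (s / u) ^ α) 0) =ᶠ[nhds t]
          (fun u => 1 - s ^ α * u ^ (-α)) := by
        have h1 : ∀ᶠ u in nhds t, u ∈ Set.Ioi s := isOpen_Ioi.eventually_mem hlt
        have h2 : ∀ᶠ u in nhds t, u ∈ Set.Ioi (0:ℝ) := isOpen_Ioi.eventually_mem ht
        filter_upwards [h1, h2] with u h1 h2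
        exact williamson_kernel_lt hα hs h2 h1
      have := hder.congr_of_eventuallyEq hev
      rw [show s ^ α * (α * t ^ (-α - 1)) = -(s ^ α * (-α * t ^ (-α - 1))) by ring]
      exact this
    · rw [Set.indicator_of_notMem (by simp only [Set.mem_Iio, not_lt]; linarith)]
      have hev : (fun u => max (1 - (s / u) ^ α) 0) =ᶠ[nhds t] (fun _ => (0:ℝ)) := by
        have h1 : ∀ᶠ u in nhds t, u ∈ Set.Iio s := isOpen_Iio.eventually_mem hgt
        have h2 : ∀ᶠ u in nhds t, u ∈ Set.Ioi (0:ℝ) := isOpen_Ioi.eventually_mem ht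
        filter_upwards [h1, h2] with u h1 h2
        exact williamson_kernel_gt hα h2 h1
      exact (hasDerivAt_const t 0).congr_of_eventuallyEq hev
  -- differentiate under the integral
  have hF'meas : MeasureTheory.AEStronglyMeasurable
      (fun s => Set.indicator (Set.Iio t) (fun s => s ^ α * (α * t ^ (-α - 1))) s) μ :=
    ((hmeas_pow.mul_const _).indicator measurableSet_Iio).aestronglyMeasurable
  have key := hasDerivAt_integral_of_dominated_loc_of_lip
    (F := fun u s => max (1 - (s / u) ^ α) 0)
    (F' := fun s => Set.indicator (Set.Iio t) (fun s => s ^ α * (α * t ^ (-α - 1))) s)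
    (x₀ := t) (bound := fun _ => C) (Metric.ball_mem_nhds t ht2)
    (Filter.Eventually.of_forall hmeasK) hint_t hF'meas hlip (integrable_const C) hdiff
  have hHasD : HasDerivAt H
      (∫ s, Set.indicator (Set.Iio t) (fun s => s ^ α * (α * t ^ (-α - 1))) s ∂μ) t := by
    have hHe : H = fun u => ∫ s, max (1 - (s / u) ^ α) 0 ∂μ := funext hH
    rw [hHe]
    exact key.2
  have hH' : H' = G * (α * t ^ (-α - 1)) := by
    rw [hd.unique hHasD, hG, ← MeasureTheory.integral_mul_const]
    congr 1
    funext s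
    by_cases h : s ∈ Set.Iio t
    · rw [Set.indicator_of_mem h, Set.indicator_of_mem h]
    · rw [Set.indicator_of_notMem h, Set.indicator_of_notMem h, zero_mul]
  -- compute H t
  have hHt : H t = (μ (Set.Iio t)).toReal - G * t ^ (-α) := by
    rw [hH t]
    have hcong : (fun s => max (1 - (s / t) ^ α) 0) =ᶠ[MeasureTheory.ae μ]
        (fun s => Set.indicator (Set.Iio t) (fun _ => (1:ℝ)) s
          - Set.indicator (Set.Iio t) (fun s => s ^ α) s * t ^ (-α)) := by
      filter_upwards [hae0, haet] with s hs hst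
      rcases lt_or_gt_of_ne hst with hlt | hgt
      · rw [Set.indicator_of_mem (Set.mem_Iio.mpr hlt),
          Set.indicator_of_mem (Set.mem_Iio.mpr hlt),
          williamson_kernel_lt hα hs ht hlt]
      · have hnm : s ∉ Set.Iio t := by simp only [Set.mem_Iio, not_lt]; linarith
        rw [Set.indicator_of_notMem hnm, Set.indicator_of_notMem hnm,
          williamson_kernel_gt hα ht hgt]
        ring
    rw [MeasureTheory.integral_congr_ae hcong,
      MeasureTheory.integral_sub ((integrable_const (1:ℝ)).indicator measurableSet_Iio)
        (hGint.mul_const _)]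
    rw [MeasureTheory.integral_indicator_const (1:ℝ) measurableSet_Iio,
      MeasureTheory.integral_mul_const, smul_eq_mul, mul_one, ← hG]
    rfl
  -- conclude
  rw [hFt, hHt, hH']
  have hpow : t ^ (-α) = t * t ^ (-α - 1) := by
    have h := Real.rpow_add ht 1 (-α - 1)
    rw [Real.rpow_one, show 1 + (-α - 1) = -α by ring] at h
    exact h
  rw [hpow]
  set X := t ^ (-α - 1) with hX
  have hfin : α⁻¹ * t * (G * (α * X)) = G * (t * X) := by
    field_simp
  rw [hfin]
  ring
end

section
/- For the max-convolution risk model with uniform claim and premium distributions: if F(x) = min{x/a, 1} and G(x) = min{x/b, 1} with 0 < a < b, the function δ(u) = √((1 − a/b)/(1 − u²/(ab))) for u ∈ [0,a], δ(u) = √(1 − a/b)·(1 − a²/(ab))^{−1/2} constant on [a,b], δ(u)=1 for u ≥ b, satisfies the ODE δ'(u)(1 − F(u)G(u)) = δ(u)G(u)f(u) on (0,a), where f(u) = 1/a. -/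
/-- In the max-convolution risk model with `F(x) = min(x/a,1)`, `G(x) = min(x/b,1)`,
`0 < a < b`, the non-ruin probability
`δ(u) = √((1-a/b)/(1-u²/(ab)))` on `[0,a)`, constant `√(1-a/b)·(1-a²/(ab))^{-1/2}` on `[a,b)`,
and `1` for `u ≥ b`, satisfies `δ'(u)(1 - F(u)G(u)) = δ(u)G(u)f(u)` on `(0,a)`, `f(u) = 1/a`. -/
theorem max_conv_ode (a b : ℝ) (ha : 0 < a) (hab : a < b) :
    ∀ u ∈ Set.Ioo 0 a,
      deriv (fun v : ℝ => if v < a then Real.sqrt ((1 - a / b) / (1 - v ^ 2 / (a * b)))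
          else if v < b then Real.sqrt (1 - a / b) / Real.sqrt (1 - a ^ 2 / (a * b))
          else 1) u * (1 - min (u / a) 1 * min (u / b) 1) =
        (if u < a then Real.sqrt ((1 - a / b) / (1 - u ^ 2 / (a * b)))
          else if u < b then Real.sqrt (1 - a / b) / Real.sqrt (1 - a ^ 2 / (a * b))
          else 1) * min (u / b) 1 * (1 / a) := by
  intro u hu
  obtain ⟨hu0, hua⟩ := hu
  have hb : 0 < b := ha.trans hab
  have hab' : 0 < a * b := by positivity
  have hg : 0 < 1 - u ^ 2 / (a * b) := by
    rw [sub_pos, div_lt_one hab']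
    nlinarith
  have hc : 0 < 1 - a / b := by
    rw [sub_pos, div_lt_one hb]; exact hab
  rw [if_pos hua]
  have hmin1 : min (u / a) 1 = u / a := min_eq_left (by
    rw [div_le_one ha]; exact hua.le)
  have hmin2 : min (u / b) 1 = u / b := min_eq_left (by
    rw [div_le_one hb]; exact (hua.trans hab).le)
  rw [hmin1, hmin2]
  have hev : (fun v : ℝ => if v < a then Real.sqrt ((1 - a / b) / (1 - v ^ 2 / (a * b)))
          else if v < b then Real.sqrt (1 - a / b) / Real.sqrt (1 - a ^ 2 / (a * b))
          else 1) =ᶠ[nhds u] fun v => Real.sqrt ((1 - a / b) / (1 - v ^ 2 / (a * b))) := by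
    filter_upwards [eventually_lt_nhds hua] with v hv
    simp [hv]
  rw [hev.deriv_eq]
  have h1 : HasDerivAt (fun v : ℝ => 1 - v ^ 2 / (a * b)) (-(2 * u / (a * b))) u := by
    have := ((hasDerivAt_pow 2 u).div_const (a * b)).const_sub 1
    simpa using this
  have hq : HasDerivAt (fun v : ℝ => (1 - a / b) / (1 - v ^ 2 / (a * b)))
      ((0 * (1 - u ^ 2 / (a * b)) - (1 - a / b) * (-(2 * u / (a * b)))) /
        (1 - u ^ 2 / (a * b)) ^ 2) u :=
    (hasDerivAt_const u (1 - a / b)).div h1 hg.ne'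
  have hqpos : 0 < (1 - a / b) / (1 - u ^ 2 / (a * b)) := by positivity
  have hsd := hq.sqrt hqpos.ne'
  rw [hsd.deriv]
  set s := Real.sqrt ((1 - a / b) / (1 - u ^ 2 / (a * b))) with hs
  have hs2 : s ^ 2 = (1 - a / b) / (1 - u ^ 2 / (a * b)) := Real.sq_sqrt hqpos.le
  have hspos : 0 < s := Real.sqrt_pos.mpr hqpos
  have hcg : (1 - a / b) = s ^ 2 * (1 - u ^ 2 / (a * b)) := by
    rw [hs2, div_mul_cancel₀ _ hg.ne']
  rw [hcg]
  have hg2 : a * b - u ^ 2 ≠ 0 := by nlinarith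
  field_simp [hspos.ne', hg2]
  ring
end

section
/- If δ : [0,∞) → [0,1] is differentiable, satisfies δ'(z) = (γ/β^α)δ(z) − (γ/β^α)∫_0^z δ(z−x)dF(x) for all z ≥ 0 with F a c.d.f. with F(0)=0, then δ(t) = δ(0) + (γ/β^α)∫_0^t δ(t−x)(1−F(x))dx for all t ≥ 0. -/
open MeasureTheory Set

/-- If the bounded differentiable `δ` satisfies
`δ'(z) = (γ/β^α) δ(z) - (γ/β^α) ∫_0^z δ(z-x) dF(x)` for all `z ≥ 0` (with `F(0) = 0`),
then `δ(t) = δ(0) + (γ/β^α) ∫_0^t δ(t-x)(1-F(x)) dx` for all `t ≥ 0`. -/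
theorem renewal_integrated (α β γ : ℝ) (hα : 0 < α) (hβ : 0 < β) (hγ : 0 < γ)
    (μ : Measure ℝ) [IsProbabilityMeasure μ] (hμ : μ (Set.Iic 0) = 0)
    (F : ℝ → ℝ) (hF : ∀ x, F x = (μ (Set.Iic x)).toReal)
    (δ : ℝ → ℝ) (hbdd : ∃ C, ∀ z, |δ z| ≤ C)
    (hd : ∀ z, 0 ≤ z → HasDerivAt δ
      (γ / β ^ α * δ z - γ / β ^ α * ∫ x in Set.Icc 0 z, δ (z - x) ∂μ) z) :
    ∀ t, 0 ≤ t →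
      δ t = δ 0 + γ / β ^ α * ∫ x in Set.Ioc 0 t, δ (t - x) * (1 - F x) := by
  obtain ⟨C, hC⟩ := hbdd
  have hC0 : 0 ≤ C := (abs_nonneg _).trans (hC 0)
  set c := γ / β ^ α with hc
  set η : ℝ → ℝ := fun z => δ (max z 0) with hη
  have hηδ : ∀ z, 0 ≤ z → η z = δ z := fun z hz => by simp [hη, max_eq_left hz]
  have hηcont : Continuous η := by
    rw [continuous_iff_continuousAt]
    intro z
    have h2 : ContinuousAt (fun z : ℝ => max z 0) z :=
      (continuous_id.max continuous_const).continuousAt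
    exact ContinuousAt.comp ((hd _ (le_max_right z 0)).continuousAt) h2
  have hηb : ∀ z, |η z| ≤ C := fun z => hC _
  -- measurability of F
  have hFmono : Monotone F := by
    intro a b hab
    rw [hF, hF]
    exact ENNReal.toReal_le_toReal (measure_ne_top μ _) (measure_ne_top μ _)
      |>.mpr (measure_mono (Iic_subset_Iic.2 hab))
  have hFmeas : Measurable F := hFmono.measurable
  have hF01 : ∀ x, 0 ≤ F x ∧ F x ≤ 1 := by
    intro x
    refine ⟨by rw [hF]; exact ENNReal.toReal_nonneg, ?_⟩
    rw [hF]
    simpa using ENNReal.toReal_mono ENNReal.one_ne_top prob_le_one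
  -- the kernel function
  set S : Set (ℝ × ℝ) := {q : ℝ × ℝ | 0 ≤ q.2 ∧ q.2 ≤ q.1} with hS
  have hSmeas : MeasurableSet S :=
    (measurableSet_le measurable_const measurable_snd).inter
      (measurableSet_le measurable_snd measurable_fst)
  set f : ℝ × ℝ → ℝ := S.indicator (fun q => η (q.1 - q.2)) with hf
  have hfmeas : StronglyMeasurable f :=
    ((hηcont.comp (continuous_fst.sub continuous_snd)).stronglyMeasurable).indicator hSmeas
  have hfb : ∀ p, |f p| ≤ C := by
    intro p
    by_cases hp : p ∈ S
    · rw [hf, indicator_of_mem hp]; exact hηb _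
    · rw [hf, indicator_of_notMem hp]; simpa using hC0
  set h : ℝ → ℝ := fun z => ∫ x, f (z, x) ∂μ with hh
  have hhmeas : StronglyMeasurable h := hfmeas.integral_prod_right'
  have hhb : ∀ z, |h z| ≤ C := by
    intro z
    have := norm_integral_le_of_norm_le_const (μ := μ) (f := fun x => f (z, x)) (C := C)
      (ae_of_all _ fun x => by simpa using hfb (z, x))
    simpa using this
  -- identify h with the set integral appearing in hd
  have hint_eq : ∀ z, 0 ≤ z → (∫ x in Set.Icc 0 z, δ (z - x) ∂μ) = h z := by
    intro z hz
    have h1 : (∫ x in Set.Icc 0 z, δ (z - x) ∂μ) = ∫ x in Set.Icc 0 z, η (z - x) ∂μ := by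
      refine setIntegral_congr_fun measurableSet_Icc fun x hx => ?_
      exact (hηδ _ (by linarith [hx.1, hx.2])).symm
    rw [h1, ← integral_indicator measurableSet_Icc]
    refine integral_congr_ae (ae_of_all _ fun x => ?_)
    simp only [hf, indicator_apply]
    by_cases hx : x ∈ Icc 0 z
    · rw [if_pos hx, if_pos (show (z, x) ∈ S from ⟨hx.1, hx.2⟩)]
    · rw [if_neg hx, if_neg (show (z, x) ∉ S from fun hm => hx ⟨hm.1, hm.2⟩)]
  have hd' : ∀ z, 0 ≤ z → HasDerivAt δ (c * η z - c * h z) z := by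
    intro z hz
    have := hd z hz
    rwa [hint_eq z hz, ← hηδ z hz] at this
  intro t ht
  set g : ℝ → ℝ := fun z => c * η z - c * h z with hg
  have hgmeas : StronglyMeasurable g :=
    ((stronglyMeasurable_const.mul hηcont.stronglyMeasurable).sub
      (stronglyMeasurable_const.mul hhmeas))
  have hgb : ∀ z, |g z| ≤ |c| * C + |c| * C := by
    intro z
    calc |g z| ≤ |c * η z| + |c * h z| := abs_sub _ _
    _ ≤ |c| * C + |c| * C := by
        rw [abs_mul, abs_mul]
        gcongr
        exacts [hηb z, hhb z]
  have hgint : IntervalIntegrable g volume 0 t := by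
    rw [intervalIntegrable_iff]
    refine (integrableOn_const ?_).mono' hgmeas.aestronglyMeasurable
      (ae_of_all _ fun z => hgb z)
    exact measure_Ioc_lt_top.ne
  have hFTC : ∫ z in (0:ℝ)..t, g z = δ t - δ 0 := by
    refine intervalIntegral.integral_eq_sub_of_hasDerivAt (fun z hz => ?_) hgint
    rw [uIcc_of_le ht] at hz
    exact hd' z hz.1
  have hIoc_lt : volume (Ioc (0:ℝ) t) < ⊤ := measure_Ioc_lt_top
  have hInt_eta : IntegrableOn η (Ioc 0 t) volume := hηcont.integrableOn_Ioc
  have hInt_h : IntegrableOn h (Ioc 0 t) volume :=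
    (integrableOn_const hIoc_lt.ne).mono' hhmeas.aestronglyMeasurable.restrict
      (ae_of_all _ fun z => hhb z)
  have hsplit : ∫ z in Ioc (0:ℝ) t, g z
      = c * (∫ z in Ioc (0:ℝ) t, η z) - c * ∫ z in Ioc (0:ℝ) t, h z := by
    show ∫ z in Ioc (0:ℝ) t, (c * η z - c * h z) = _
    rw [integral_sub (hInt_eta.const_mul c) (hInt_h.const_mul c),
      integral_const_mul c, integral_const_mul c]
  haveI hfin1 : IsFiniteMeasure (volume.restrict (Ioc (0:ℝ) t)) :=
    ⟨by rw [Measure.restrict_apply_univ]; exact hIoc_lt⟩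
  have hprod1 : Integrable f ((volume.restrict (Ioc (0:ℝ) t)).prod μ) :=
    (integrable_const C).mono' hfmeas.aestronglyMeasurable
      (ae_of_all _ fun p => by simpa using hfb p)
  have swap1 : ∫ z in Ioc (0:ℝ) t, h z = ∫ x, (∫ z in Ioc (0:ℝ) t, f (z, x)) ∂μ :=
    integral_integral_swap (f := fun z x => f (z, x)) (by exact hprod1)
  have hae : ∀ᵐ x ∂μ, 0 < x := by
    have hset : {x : ℝ | ¬ 0 < x} = Iic 0 := by ext x; simp
    rw [ae_iff, hset]; exact hμ
  have inner1 : ∀ x : ℝ, 0 < x →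
      (∫ z in Ioc (0:ℝ) t, f (z, x))
        = (Ioc (0:ℝ) t).indicator (fun x => ∫ u in (0:ℝ)..(t - x), η u) x := by
    intro x hx
    have hfz : ∀ z : ℝ, f (z, x) = (Ici x).indicator (fun z => η (z - x)) z := by
      intro z
      by_cases hzx : x ≤ z
      · rw [hf, indicator_of_mem (show (z, x) ∈ S from ⟨hx.le, hzx⟩),
          indicator_of_mem (show z ∈ Ici x from hzx)]
      · rw [hf, indicator_of_notMem (show (z, x) ∉ S from fun hm => hzx hm.2),
          indicator_of_notMem (show z ∉ Ici x from hzx)]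
    simp only [hfz]
    rw [setIntegral_indicator measurableSet_Ici]
    by_cases hxt : x ≤ t
    · have hset : Ioc (0:ℝ) t ∩ Ici x = Icc x t := by
        ext z
        simp only [mem_inter_iff, mem_Ioc, mem_Ici, mem_Icc]
        constructor
        · rintro ⟨⟨_, h2⟩, h3⟩; exact ⟨h3, h2⟩
        · rintro ⟨h1, h2⟩; exact ⟨⟨lt_of_lt_of_le hx h1, h2⟩, h1⟩
      rw [hset, indicator_of_mem (show x ∈ Ioc (0:ℝ) t from ⟨hx, hxt⟩),
        integral_Icc_eq_integral_Ioc, ← intervalIntegral.integral_of_le hxt,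
        intervalIntegral.integral_comp_sub_right (fun u => η u) x, sub_self]
    · have hset : Ioc (0:ℝ) t ∩ Ici x = ∅ := by
        ext z
        simp only [mem_inter_iff, mem_Ioc, mem_Ici, mem_empty_iff_false, iff_false, not_and]
        rintro ⟨_, h2⟩ h3; exact hxt (le_trans h3 h2)
      rw [hset, indicator_of_notMem (show x ∉ Ioc (0:ℝ) t from fun hm => hxt hm.2)]
      simp
  have hA : ∫ z in Ioc (0:ℝ) t, h z
      = ∫ x in Ioc (0:ℝ) t, (∫ u in (0:ℝ)..(t - x), η u) ∂μ := by
    calc ∫ z in Ioc (0:ℝ) t, h z = ∫ x, (∫ z in Ioc (0:ℝ) t, f (z, x)) ∂μ := swap1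
      _ = ∫ x, (Ioc (0:ℝ) t).indicator (fun x => ∫ u in (0:ℝ)..(t - x), η u) x ∂μ :=
          integral_congr_ae (by filter_upwards [hae] with x hx using inner1 x hx)
      _ = ∫ x in Ioc (0:ℝ) t, (∫ u in (0:ℝ)..(t - x), η u) ∂μ :=
          integral_indicator measurableSet_Ioc
  -- second Fubini
  set S2 : Set (ℝ × ℝ) := {q : ℝ × ℝ | 0 < q.2 ∧ q.2 ≤ t - q.1} with hS2
  have hS2meas : MeasurableSet S2 :=
    (measurableSet_lt measurable_const measurable_snd).inter
      (measurableSet_le measurable_snd (measurable_const.sub measurable_fst))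
  set f2 : ℝ × ℝ → ℝ := S2.indicator (fun q => η q.2) with hf2
  have hf2meas : StronglyMeasurable f2 :=
    ((hηcont.comp continuous_snd).stronglyMeasurable).indicator hS2meas
  have hf2b : ∀ p, |f2 p| ≤ C := by
    intro p
    by_cases hp : p ∈ S2
    · rw [hf2, indicator_of_mem hp]; exact hηb _
    · rw [hf2, indicator_of_notMem hp]; simpa using hC0
  have hGx : ∀ x ∈ Ioc (0:ℝ) t,
      (∫ u in (0:ℝ)..(t - x), η u) = ∫ u in Ioc (0:ℝ) t, f2 (x, u) := by
    intro x hx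
    have h1 : ∀ u : ℝ, f2 (x, u) = (Ioc (0:ℝ) (t - x)).indicator η u := by
      intro u
      by_cases hu : u ∈ Ioc (0:ℝ) (t - x)
      · rw [indicator_of_mem hu, hf2,
          indicator_of_mem (show (x, u) ∈ S2 from ⟨hu.1, hu.2⟩)]
      · rw [indicator_of_notMem hu, hf2,
          indicator_of_notMem (show (x, u) ∉ S2 from fun hm => hu ⟨hm.1, hm.2⟩)]
    simp only [h1]
    rw [setIntegral_indicator measurableSet_Ioc]
    have hset : Ioc (0:ℝ) t ∩ Ioc (0:ℝ) (t - x) = Ioc 0 (t - x) := by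
      rw [Ioc_inter_Ioc]
      simp [min_eq_right (show t - x ≤ t by linarith [hx.1])]
    rw [hset, intervalIntegral.integral_of_le (show (0:ℝ) ≤ t - x by linarith [hx.2])]
  haveI hfin2 : IsFiniteMeasure (μ.restrict (Ioc (0:ℝ) t)) :=
    ⟨lt_of_le_of_lt (by rw [Measure.restrict_apply_univ]; exact measure_mono (subset_univ _))
      (by simp : μ univ < ⊤)⟩
  have hprod2 : Integrable f2 ((μ.restrict (Ioc (0:ℝ) t)).prod (volume.restrict (Ioc (0:ℝ) t))) :=
    (integrable_const C).mono' hf2meas.aestronglyMeasurable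
      (ae_of_all _ fun p => by simpa using hf2b p)
  have swap2 : ∫ x in Ioc (0:ℝ) t, (∫ u in Ioc (0:ℝ) t, f2 (x, u)) ∂μ
      = ∫ u in Ioc (0:ℝ) t, (∫ x in Ioc (0:ℝ) t, f2 (x, u) ∂μ) :=
    integral_integral_swap (f := fun x u => f2 (x, u)) (by exact hprod2)
  have inner2 : ∀ u ∈ Ioc (0:ℝ) t,
      (∫ x in Ioc (0:ℝ) t, f2 (x, u) ∂μ) = F (t - u) * η u := by
    intro u hu
    have h1 : ∀ x : ℝ, f2 (x, u) = (Iic (t - u)).indicator (fun _ => η u) x := by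
      intro x
      by_cases hx : x ≤ t - u
      · rw [indicator_of_mem (show x ∈ Iic (t - u) from hx), hf2,
          indicator_of_mem (show (x, u) ∈ S2 from ⟨hu.1, by linarith⟩)]
      · rw [indicator_of_notMem (show x ∉ Iic (t - u) from hx), hf2,
          indicator_of_notMem (show (x, u) ∉ S2 from fun hm => hx (by linarith [hm.2]))]
    simp only [h1]
    rw [setIntegral_indicator measurableSet_Iic]
    have hset : Ioc (0:ℝ) t ∩ Iic (t - u) = Ioc 0 (t - u) := by
      ext x
      simp only [mem_inter_iff, mem_Ioc, mem_Iic]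
      constructor
      · rintro ⟨⟨h1', _⟩, h2'⟩; exact ⟨h1', h2'⟩
      · rintro ⟨h1', h2'⟩; exact ⟨⟨h1', by linarith [hu.1]⟩, h2'⟩
    have hμeq : μ (Ioc 0 (t - u)) = μ (Iic (t - u)) := by
      refine le_antisymm (measure_mono Ioc_subset_Iic_self) ?_
      calc μ (Iic (t - u)) = μ (Iic 0 ∪ Ioc 0 (t - u)) := by
            rw [Iic_union_Ioc_eq_Iic (show (0:ℝ) ≤ t - u by linarith [hu.2])]
        _ ≤ μ (Iic 0) + μ (Ioc 0 (t - u)) := measure_union_le _ _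
        _ = μ (Ioc 0 (t - u)) := by rw [hμ, zero_add]
    rw [hset, setIntegral_const, measureReal_def, hμeq, smul_eq_mul, hF]
  have refl1 : ∫ x in Ioc (0:ℝ) t, η (t - x) = ∫ z in Ioc (0:ℝ) t, η z := by
    rw [← intervalIntegral.integral_of_le ht, ← intervalIntegral.integral_of_le ht,
      intervalIntegral.integral_comp_sub_left η t, sub_self, sub_zero]
  have refl2 : ∫ x in Ioc (0:ℝ) t, η (t - x) * F x = ∫ u in Ioc (0:ℝ) t, F (t - u) * η u := by
    rw [← intervalIntegral.integral_of_le ht, ← intervalIntegral.integral_of_le ht]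
    have hcongr : ∫ x in (0:ℝ)..t, η (t - x) * F x
        = ∫ x in (0:ℝ)..t, (fun u => F (t - u) * η u) (t - x) := by
      refine intervalIntegral.integral_congr fun x _ => ?_
      simp only [sub_sub_cancel]
      ring
    rw [hcongr, intervalIntegral.integral_comp_sub_left (fun u => F (t - u) * η u) t,
      sub_self, sub_zero]
  have hAval : ∫ z in Ioc (0:ℝ) t, h z = ∫ x in Ioc (0:ℝ) t, η (t - x) * F x := by
    rw [hA]
    calc ∫ x in Ioc (0:ℝ) t, (∫ u in (0:ℝ)..(t - x), η u) ∂μ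
        = ∫ x in Ioc (0:ℝ) t, (∫ u in Ioc (0:ℝ) t, f2 (x, u)) ∂μ :=
          setIntegral_congr_fun measurableSet_Ioc hGx
      _ = ∫ u in Ioc (0:ℝ) t, (∫ x in Ioc (0:ℝ) t, f2 (x, u) ∂μ) := swap2
      _ = ∫ u in Ioc (0:ℝ) t, F (t - u) * η u :=
          setIntegral_congr_fun measurableSet_Ioc inner2
      _ = ∫ x in Ioc (0:ℝ) t, η (t - x) * F x := refl2.symm
  have hmain : δ t - δ 0
      = c * ((∫ x in Ioc (0:ℝ) t, η (t - x)) - ∫ x in Ioc (0:ℝ) t, η (t - x) * F x) := by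
    rw [← hFTC, intervalIntegral.integral_of_le ht, hsplit, hAval, refl1]
    ring
  have hRδ : ∫ x in Ioc (0:ℝ) t, δ (t - x) * (1 - F x)
      = ∫ x in Ioc (0:ℝ) t, η (t - x) * (1 - F x) :=
    setIntegral_congr_fun measurableSet_Ioc fun x hx => by
      rw [hηδ _ (show (0:ℝ) ≤ t - x by linarith [hx.2])]
  have hIntηt : IntegrableOn (fun x => η (t - x)) (Ioc 0 t) volume :=
    (hηcont.comp (continuous_const.sub continuous_id)).integrableOn_Ioc
  have hIntF : IntegrableOn (fun x => η (t - x) * F x) (Ioc 0 t) volume := by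
    have hmeasF : AEStronglyMeasurable (fun x => η (t - x) * F x) (volume.restrict (Ioc 0 t)) :=
      ((hηcont.comp (continuous_const.sub continuous_id)).stronglyMeasurable.mul
        hFmeas.stronglyMeasurable).aestronglyMeasurable.restrict
    have hconst : IntegrableOn (fun _ : ℝ => C) (Ioc 0 t) volume :=
      integrableOn_const hIoc_lt.ne
    refine hconst.mono' hmeasF (ae_of_all _ fun x => ?_)
    have h1 : |F x| ≤ 1 := abs_le.2 ⟨by linarith [(hF01 x).1], (hF01 x).2⟩
    calc ‖η (t - x) * F x‖ = |η (t - x)| * |F x| := abs_mul _ _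
      _ ≤ C * 1 := mul_le_mul (hηb _) h1 (abs_nonneg _) hC0
      _ = C := mul_one C
  have hRsplit : ∫ x in Ioc (0:ℝ) t, η (t - x) * (1 - F x)
      = (∫ x in Ioc (0:ℝ) t, η (t - x)) - ∫ x in Ioc (0:ℝ) t, η (t - x) * F x := by
    rw [← integral_sub hIntηt hIntF]
    exact setIntegral_congr_fun measurableSet_Ioc fun x _ => by ring
  rw [hRδ, hRsplit]
  linarith [hmain]
end

section
/- For the Kendall convolution with point mass: for v < t and probability measure μ with c.d.f. F and reversed Williamson transform H, (δ_v ▵_α μ)([0,t)) = Ψ(v/t)F(t) + (1 − Ψ(v/t))H(t), where Ψ(s) = 1 − s^α; for v ≥ t the measure of [0,t) is 0. -/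
open MeasureTheory intervalIntegral
open scoped ENNReal

theorem KPMaux1 (α : ℝ) (hα : 0 < α) (a b : ℝ) (ha : 1 ≤ a) (hab : a ≤ b) :
    ∫⁻ s in Set.Ioc a b, ENNReal.ofReal (2*α*s^(-2*α-1)) = ENNReal.ofReal (a^(-(2*α)) - b^(-(2*α))) := by
  have h0 : (0:ℝ) ∉ Set.uIcc a b := by
    rw [Set.uIcc_of_le hab]; intro h; exact absurd h.1 (by linarith)
  have hInt : IntervalIntegrable (fun s : ℝ => 2*α*s^(-2*α-1)) volume a b :=
    (intervalIntegrable_rpow (Or.inr h0)).const_mul _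
  rw [← ofReal_integral_eq_lintegral_ofReal]
  · congr 1
    rw [← intervalIntegral.integral_of_le hab, intervalIntegral.integral_const_mul,
      integral_rpow (Or.inr ⟨by nlinarith, h0⟩)]
    have he : -2*α-1+1 = -(2*α) := by ring
    rw [he]; field_simp; ring
  · exact (intervalIntegrable_iff_integrableOn_Ioc_of_le hab).mp hInt
  · filter_upwards [ae_restrict_mem measurableSet_Ioc] with s hs
    have h1 : (0:ℝ) < s := by linarith [hs.1]
    positivity

theorem KPMkerIco (α : ℝ) (hα : 0 < α)
    (ker : ℝ → Measure ℝ)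
    (hker : ∀ z, ker z = ENNReal.ofReal (z ^ α) •
        ((volume.restrict (Set.Ici (1 : ℝ))).withDensity
          fun s => ENNReal.ofReal (2 * α * s ^ (-2 * α - 1))) +
        ENNReal.ofReal (1 - z ^ α) • Measure.dirac (1 : ℝ))
    (z b : ℝ) (hz0 : 0 ≤ z) (hz1 : z ≤ 1) :
    ker z (Set.Ico 0 b) =
      if 1 < b then ENNReal.ofReal (1 - z^α * b^(-(2*α))) else 0 := by
  have hm : ((volume.restrict (Set.Ici (1:ℝ))).withDensity
      fun s => ENNReal.ofReal (2 * α * s ^ (-2 * α - 1))) (Set.Ico 0 b) =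
      ∫⁻ s in Set.Ioc 1 b, ENNReal.ofReal (2*α*s^(-2*α-1)) := by
    rw [withDensity_apply _ measurableSet_Ico, Measure.restrict_restrict measurableSet_Ico]
    have hset : Set.Ico (0:ℝ) b ∩ Set.Ici 1 = Set.Ico 1 b := by
      ext s
      simp only [Set.mem_inter_iff, Set.mem_Ico, Set.mem_Ici]
      constructor
      · rintro ⟨⟨_, h2⟩, h3⟩; exact ⟨h3, h2⟩
      · rintro ⟨h1, h2⟩; exact ⟨⟨by linarith, h2⟩, h1⟩
    rw [hset, Measure.restrict_congr_set Ico_ae_eq_Ioc]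
  rw [hker z]
  simp only [Measure.add_apply, Measure.smul_apply, smul_eq_mul, hm,
    Measure.dirac_apply' _ measurableSet_Ico]
  by_cases hb : 1 < b
  · have hioc : Set.Ioc (1:ℝ) b = Set.Ioc 1 b := rfl
    rw [KPMaux1 α hα 1 b le_rfl hb.le]
    have h1 : (1:ℝ) ∈ Set.Ico (0:ℝ) b := ⟨zero_le_one, hb⟩
    rw [Set.indicator_of_mem h1]
    simp only [Pi.one_apply, mul_one, if_pos hb, Real.one_rpow]
    have hb2 : b^(-(2*α)) ≤ 1 := Real.rpow_le_one_of_one_le_of_nonpos hb.le (by linarith)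
    have hz : z^α ≤ 1 := Real.rpow_le_one hz0 hz1 hα.le
    have hznn : 0 ≤ z^α := Real.rpow_nonneg hz0 α
    rw [← ENNReal.ofReal_mul hznn, ← ENNReal.ofReal_add (by nlinarith) (by linarith)]
    congr 1; ring
  · have hioc : Set.Ioc (1:ℝ) b = ∅ := Set.Ioc_eq_empty (by simpa using hb)
    rw [hioc]
    have h1 : (1:ℝ) ∉ Set.Ico (0:ℝ) b := fun h => hb h.2
    rw [Set.indicator_of_notMem h1]
    simp [hb]

theorem KPMrid (α : ℝ) (v y t : ℝ) (hv : 0 ≤ v) (hy : 0 < y) (ht : 0 < t) :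
    (v/y)^α * (t/y)^(-(2*α)) = (v*y/t^2)^α := by
  have hyne : y^α ≠ 0 := (Real.rpow_pos_of_pos hy α).ne'
  have htne : t^α ≠ 0 := (Real.rpow_pos_of_pos ht α).ne'
  have h2 : ∀ x : ℝ, 0 < x → x^(2*α) = x^α * x^α := fun x hx => by
    rw [two_mul, Real.rpow_add hx]
  have hty : (t/y)^(-(2*α)) = (y^α * y^α) / (t^α * t^α) := by
    rw [Real.rpow_neg (div_pos ht hy).le, Real.div_rpow ht.le hy.le,
      h2 t ht, h2 y hy]
    rw [inv_div]
  rw [hty, Real.div_rpow hv hy.le]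
  have hrhs : (v*y/t^2)^α = v^α * y^α / (t^α * t^α) := by
    rw [Real.div_rpow (by positivity) (by positivity), Real.mul_rpow hv hy.le, sq,
      Real.mul_rpow ht.le ht.le]
  rw [hrhs]
  field_simp
theorem KPMKIco (α : ℝ) (hα : 0 < α)
    (ker : ℝ → Measure ℝ)
    (hker : ∀ z, ker z = ENNReal.ofReal (z ^ α) •
        ((volume.restrict (Set.Ici (1 : ℝ))).withDensity
          fun s => ENNReal.ofReal (2 * α * s ^ (-2 * α - 1))) +
        ENNReal.ofReal (1 - z ^ α) • Measure.dirac (1 : ℝ))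
    (K : ℝ → ℝ → Measure ℝ)
    (hK : ∀ x y, K x y = if x ≤ y then Measure.map (fun s => y * s) (ker (x / y))
        else Measure.map (fun s => x * s) (ker (y / x)))
    (v y t : ℝ) (hv : 0 ≤ v) (hy : 0 < y) (ht : 0 < t) :
    K v y (Set.Ico 0 t) =
      if v < t ∧ y < t then ENNReal.ofReal (1 - (v*y/t^2)^α) else 0 := by
  have hpre : ∀ c : ℝ, 0 < c → (fun s => c * s) ⁻¹' Set.Ico 0 t = Set.Ico 0 (t/c) := by
    intro c hc
    ext s
    simp only [Set.mem_preimage, Set.mem_Ico]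
    constructor
    · rintro ⟨h1, h2⟩
      exact ⟨nonneg_of_mul_nonneg_right h1 hc, (lt_div_iff₀' hc).2 h2⟩
    · rintro ⟨h1, h2⟩
      exact ⟨mul_nonneg hc.le h1, (lt_div_iff₀' hc).1 h2⟩
  rw [hK]
  by_cases hvy : v ≤ y
  · rw [if_pos hvy, Measure.map_apply (measurable_const_mul y) measurableSet_Ico,
      hpre y hy,
      KPMkerIco α hα ker hker (v/y) (t/y) (by positivity) ((div_le_one hy).2 hvy)]
    simp only [one_lt_div hy]
    by_cases hyt : y < t
    · rw [if_pos hyt, if_pos ⟨lt_of_le_of_lt hvy hyt, hyt⟩, KPMrid α v y t hv hy ht]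
    · rw [if_neg hyt, if_neg (fun h => hyt h.2)]
  · push_neg at hvy
    have hv0 : 0 < v := lt_trans hy hvy
    rw [if_neg (not_le.2 hvy), Measure.map_apply (measurable_const_mul v) measurableSet_Ico,
      hpre v hv0,
      KPMkerIco α hα ker hker (y/v) (t/v) (by positivity) ((div_le_one hv0).2 hvy.le)]
    simp only [one_lt_div hv0]
    by_cases hvt : v < t
    · rw [if_pos hvt, if_pos ⟨hvt, lt_trans hvy hvt⟩, KPMrid α y v t hy.le hv0 ht,
        mul_comm y v]
    · rw [if_neg hvt, if_neg (fun h => hvt h.1)]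

theorem KPMmeas (α : ℝ)
    (ker : ℝ → Measure ℝ)
    (hker : ∀ z, ker z = ENNReal.ofReal (z ^ α) •
        ((volume.restrict (Set.Ici (1 : ℝ))).withDensity
          fun s => ENNReal.ofReal (2 * α * s ^ (-2 * α - 1))) +
        ENNReal.ofReal (1 - z ^ α) • Measure.dirac (1 : ℝ))
    (K : ℝ → ℝ → Measure ℝ)
    (hK : ∀ x y, K x y = if x ≤ y then Measure.map (fun s => y * s) (ker (x / y))
        else Measure.map (fun s => x * s) (ker (y / x)))
    (v : ℝ) : Measurable fun y => K v y := by
  apply Measure.measurable_of_measurable_coe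
  intro s hs
  set f : ℝ → ℝ≥0∞ := fun u => ENNReal.ofReal (2 * α * u ^ (-2 * α - 1)) with hf
  have key : ∀ a b : ℝ, 0 < 1 →
      (Measure.map (fun s => b * s) (ker (a / b))) s =
      ENNReal.ofReal ((a/b) ^ α) *
        (∫⁻ u, s.indicator (fun _ => (1:ℝ≥0∞)) (b*u) * f u ∂(volume.restrict (Set.Ici 1))) +
      ENNReal.ofReal (1 - (a/b) ^ α) * s.indicator (fun _ => (1:ℝ≥0∞)) b := by
    intro a b _
    have hmb : Measurable fun s : ℝ => b * s := measurable_const_mul b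
    have hps : MeasurableSet ((fun s : ℝ => b * s) ⁻¹' s) := hmb hs
    rw [Measure.map_apply hmb hs, hker]
    simp only [Measure.add_apply, Measure.smul_apply, smul_eq_mul]
    congr 1
    · congr 1
      rw [withDensity_apply _ hps, ← lintegral_indicator hps]
      congr 1
      funext u
      by_cases h : b * u ∈ s
      · simp [Set.indicator_of_mem, h, Set.mem_preimage.2 h]
      · simp [Set.indicator_of_notMem, h, fun hh => h (Set.mem_preimage.1 hh)]
    · rw [Measure.dirac_apply' _ hps]
      by_cases h : b ∈ s
      · have : (1:ℝ) ∈ (fun s' : ℝ => b * s') ⁻¹' s := by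
          simp [Set.mem_preimage, mul_one, h]
        simp [Set.indicator_of_mem, this, h]
      · have : (1:ℝ) ∉ (fun s' : ℝ => b * s') ⁻¹' s := by
          simp [Set.mem_preimage, mul_one, h]
        simp [Set.indicator_of_notMem, this, h]
  have hform : (fun y => K v y s) = fun y =>
      if v ≤ y then
        ENNReal.ofReal ((v/y) ^ α) *
          (∫⁻ u, s.indicator (fun _ => (1:ℝ≥0∞)) (y*u) * f u ∂(volume.restrict (Set.Ici 1))) +
        ENNReal.ofReal (1 - (v/y) ^ α) * s.indicator (fun _ => (1:ℝ≥0∞)) y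
      else
        ENNReal.ofReal ((y/v) ^ α) *
          (∫⁻ u, s.indicator (fun _ => (1:ℝ≥0∞)) (v*u) * f u ∂(volume.restrict (Set.Ici 1))) +
        ENNReal.ofReal (1 - (y/v) ^ α) * s.indicator (fun _ => (1:ℝ≥0∞)) v := by
    funext y
    rw [hK]
    by_cases h : v ≤ y
    · rw [if_pos h, if_pos h, key v y one_pos]
    · rw [if_neg h, if_neg h, key y v one_pos]
  rw [hform]
  have hmf : Measurable f := by fun_prop
  have hint : ∀ c : ℝ, Measurable fun y : ℝ =>
      ∫⁻ u, s.indicator (fun _ => (1:ℝ≥0∞)) (y*u) * f u ∂(volume.restrict (Set.Ici (1:ℝ))) := by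
    intro c
    apply Measurable.lintegral_prod_right' (f := fun p : ℝ × ℝ =>
      s.indicator (fun _ => (1:ℝ≥0∞)) (p.1*p.2) * f p.2)
    exact ((measurable_const.indicator hs).comp (measurable_fst.mul measurable_snd)).mul
      (hmf.comp measurable_snd)
  have hco : ∀ g : ℝ → ℝ, Measurable g → Measurable fun y => ENNReal.ofReal (g y ^ α) :=
    fun g hg => ENNReal.measurable_ofReal.comp (by fun_prop)
  apply Measurable.ite (measurableSet_le measurable_const measurable_id)
  · apply Measurable.add
    · exact (hco _ (measurable_const.div measurable_id)).mul (hint v)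
    · exact (ENNReal.measurable_ofReal.comp (by fun_prop : Measurable fun y : ℝ => 1 - (v/y)^α)).mul
        (measurable_const.indicator hs)
  · apply Measurable.add
    · refine Measurable.mul (hco _ (measurable_id.div measurable_const)) measurable_const
    · exact (ENNReal.measurable_ofReal.comp (by fun_prop : Measurable fun y : ℝ => 1 - (y/v)^α)).mul
        measurable_const

theorem KPMaux2 (α : ℝ) (hα : 0 < α) (y t : ℝ) (hy : 0 < y) (hyt : y ≤ t) :
    ∫⁻ s in Set.Ioc y t, ENNReal.ofReal (α * s^(α-1)) = ENNReal.ofReal (t^α - y^α) := by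
  have hInt : IntervalIntegrable (fun s : ℝ => α*s^(α-1)) volume y t :=
    (intervalIntegrable_rpow' (by linarith)).const_mul _
  rw [← ofReal_integral_eq_lintegral_ofReal]
  · congr 1
    rw [← intervalIntegral.integral_of_le hyt, intervalIntegral.integral_const_mul,
      integral_rpow (Or.inl (by linarith))]
    have he : α-1+1 = α := by ring
    rw [he]; field_simp
  · exact (intervalIntegrable_iff_integrableOn_Ioc_of_le hyt).mp hInt
  · filter_upwards [ae_restrict_mem measurableSet_Ioc] with s hs
    have h1 : (0:ℝ) < s := lt_trans hy hs.1
    positivity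

theorem KPMfub (α : ℝ) (hα : 0 < α)
    (μ : Measure ℝ) [IsProbabilityMeasure μ] (hμ0 : μ (Set.Iio 0) = 0)
    (hcont : ∀ x : ℝ, μ {x} = 0) (t : ℝ) (ht : 0 < t) :
    ENNReal.ofReal (α * ∫ s in Set.Ioc 0 t, s^(α-1) * (μ (Set.Iic s)).toReal) =
      ∫⁻ y in Set.Ioo 0 t, ENNReal.ofReal (t^α - y^α) ∂μ := by
  set F : ℝ → ℝ := fun s => (μ (Set.Iic s)).toReal with hFdef
  have hFm : Measurable F := by
    apply Monotone.measurable
    intro a b hab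
    exact ENNReal.toReal_mono (measure_ne_top μ _) (measure_mono (Set.Iic_subset_Iic.2 hab))
  have hF01 : ∀ s, 0 ≤ F s ∧ F s ≤ 1 := by
    intro s
    refine ⟨ENNReal.toReal_nonneg, ?_⟩
    rw [show (1:ℝ) = (μ Set.univ).toReal by simp]
    exact ENNReal.toReal_mono (measure_ne_top μ _) (measure_mono (Set.subset_univ _))
  have hg : IntegrableOn (fun s : ℝ => s^(α-1)) (Set.Ioc 0 t) volume :=
    (intervalIntegrable_iff_integrableOn_Ioc_of_le ht.le).mp (intervalIntegrable_rpow' (by linarith))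
  have hInt : IntegrableOn (fun s : ℝ => s^(α-1) * F s) (Set.Ioc 0 t) volume := by
    apply Integrable.mono hg (by fun_prop : Measurable fun s : ℝ => s^(α-1) * F s).aestronglyMeasurable
    filter_upwards with s
    rw [norm_mul]
    apply mul_le_of_le_one_right (norm_nonneg _)
    rw [Real.norm_eq_abs, abs_le]
    exact ⟨by linarith [(hF01 s).1], (hF01 s).2⟩
  -- Step A
  have stepA : ENNReal.ofReal (α * ∫ s in Set.Ioc 0 t, s^(α-1) * F s) =
      ∫⁻ s in Set.Ioc 0 t, ENNReal.ofReal (α * s^(α-1)) * μ (Set.Iic s) := by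
    rw [ENNReal.ofReal_mul hα.le, ofReal_integral_eq_lintegral_ofReal hInt ?nn,
      ← lintegral_const_mul _ (by fun_prop)]
    case nn =>
      filter_upwards [ae_restrict_mem measurableSet_Ioc] with s hs
      exact mul_nonneg (Real.rpow_nonneg hs.1.le _) (hF01 s).1
    apply lintegral_congr_ae
    filter_upwards [ae_restrict_mem measurableSet_Ioc] with s hs
    rw [← ENNReal.ofReal_mul hα.le,
      show α * (s^(α-1) * F s) = (α * s^(α-1)) * F s from by ring,
      ENNReal.ofReal_mul (mul_nonneg hα.le (Real.rpow_nonneg hs.1.le _)),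
      ENNReal.ofReal_toReal (measure_ne_top μ _)]
  -- Step B : μ (Iic s) as an integral over Ioo 0 t, for s ∈ Ioc 0 t
  have stepB : ∀ s ∈ Set.Ioc (0:ℝ) t, μ (Set.Iic s) =
      ∫⁻ y in Set.Ioo 0 t, Set.indicator {p : ℝ × ℝ | p.2 ≤ p.1} (fun _ => (1:ℝ≥0∞)) (s, y) ∂μ := by
    intro s hs
    have h1 : ∀ y : ℝ, Set.indicator {p : ℝ × ℝ | p.2 ≤ p.1} (fun _ => (1:ℝ≥0∞)) (s, y) =
        Set.indicator (Set.Iic s) (fun _ => (1:ℝ≥0∞)) y := by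
      intro y
      by_cases h : y ≤ s
      · rw [Set.indicator_of_mem (by exact h : (s,y) ∈ {p : ℝ × ℝ | p.2 ≤ p.1}),
          Set.indicator_of_mem (Set.mem_Iic.2 h)]
      · rw [Set.indicator_of_notMem (by exact h : (s,y) ∉ {p : ℝ × ℝ | p.2 ≤ p.1}),
          Set.indicator_of_notMem (fun hh => h (Set.mem_Iic.1 hh))]
    simp only [h1]
    rw [lintegral_indicator measurableSet_Iic, Measure.restrict_restrict measurableSet_Iic,
      lintegral_one, Measure.restrict_apply MeasurableSet.univ, Set.univ_inter]
    apply le_antisymm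
    · have hsub : Set.Iic s ⊆ (Set.Iic s ∩ Set.Ioo 0 t) ∪ (Set.Iio 0 ∪ {0} ∪ {t}) := by
        intro y hy
        rcases lt_trichotomy y 0 with h | h | h
        · exact Or.inr (Or.inl (Or.inl h))
        · exact Or.inr (Or.inl (Or.inr h))
        · rcases eq_or_lt_of_le (le_trans (Set.mem_Iic.1 hy) hs.2) with h2 | h2
          · exact Or.inr (Or.inr h2)
          · exact Or.inl ⟨hy, h, h2⟩
      calc μ (Set.Iic s) ≤ μ ((Set.Iic s ∩ Set.Ioo 0 t) ∪ (Set.Iio 0 ∪ {0} ∪ {t})) :=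
            measure_mono hsub
        _ ≤ μ (Set.Iic s ∩ Set.Ioo 0 t) + μ (Set.Iio 0 ∪ {0} ∪ {t}) := measure_union_le _ _
        _ ≤ μ (Set.Iic s ∩ Set.Ioo 0 t) + (μ (Set.Iio 0 ∪ {0}) + μ {t}) := by
            gcongr; exact measure_union_le _ _
        _ ≤ μ (Set.Iic s ∩ Set.Ioo 0 t) + ((μ (Set.Iio 0) + μ {0}) + μ {t}) := by
            gcongr; exact measure_union_le _ _
        _ = μ (Set.Iic s ∩ Set.Ioo 0 t) := by rw [hμ0, hcont 0, hcont t]; simp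
    · exact measure_mono Set.inter_subset_left
  rw [stepA]
  rw [setLIntegral_congr_fun measurableSet_Ioc (fun s hs => by
    rw [stepB s hs])]
  -- Step C : swap
  have hswap : ∫⁻ s in Set.Ioc 0 t, ENNReal.ofReal (α * s^(α-1)) *
      ∫⁻ y in Set.Ioo 0 t, Set.indicator {p : ℝ × ℝ | p.2 ≤ p.1} (fun _ => (1:ℝ≥0∞)) (s, y) ∂μ =
      ∫⁻ y in Set.Ioo 0 t, ∫⁻ s in Set.Ioc 0 t, ENNReal.ofReal (α * s^(α-1)) *
        Set.indicator {p : ℝ × ℝ | p.2 ≤ p.1} (fun _ => (1:ℝ≥0∞)) (s, y) ∂volume ∂μ := by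
    have hmeas : Measurable (Function.uncurry fun s y : ℝ => ENNReal.ofReal (α * s^(α-1)) *
        Set.indicator {p : ℝ × ℝ | p.2 ≤ p.1} (fun _ => (1:ℝ≥0∞)) (s, y)) := by
      apply Measurable.mul
      · exact ENNReal.measurable_ofReal.comp (by fun_prop : Measurable fun p : ℝ × ℝ => α * p.1^(α-1))
      · exact (measurable_const.indicator (measurableSet_le measurable_snd measurable_fst))
    have := lintegral_lintegral_swap (μ := volume.restrict (Set.Ioc (0:ℝ) t))
      (ν := μ.restrict (Set.Ioo (0:ℝ) t)) hmeas.aemeasurable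
    rw [← this]
    apply lintegral_congr
    intro s
    exact (lintegral_const_mul _ ((measurable_const.indicator
      (measurableSet_le measurable_snd measurable_fst)).comp measurable_prodMk_left)).symm
  rw [hswap]
  -- Step D : inner integral
  apply lintegral_congr_ae
  filter_upwards [ae_restrict_mem measurableSet_Ioo] with y hy
  have h2 : ∀ s : ℝ, ENNReal.ofReal (α * s^(α-1)) *
      Set.indicator {p : ℝ × ℝ | p.2 ≤ p.1} (fun _ => (1:ℝ≥0∞)) (s, y) =
      Set.indicator (Set.Ici y) (fun s => ENNReal.ofReal (α * s^(α-1))) s := by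
    intro s
    by_cases h : y ≤ s
    · rw [Set.indicator_of_mem (by exact h : (s,y) ∈ {p : ℝ × ℝ | p.2 ≤ p.1}),
        Set.indicator_of_mem (Set.mem_Ici.2 h), mul_one]
    · rw [Set.indicator_of_notMem (by exact h : (s,y) ∉ {p : ℝ × ℝ | p.2 ≤ p.1}),
        Set.indicator_of_notMem (fun hh => h (Set.mem_Ici.1 hh)), mul_zero]
  simp only [h2]
  rw [lintegral_indicator measurableSet_Ici, Measure.restrict_restrict measurableSet_Ici]
  have hset : Set.Ici y ∩ Set.Ioc 0 t = Set.Icc y t := by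
    ext s
    simp only [Set.mem_inter_iff, Set.mem_Ici, Set.mem_Ioc, Set.mem_Icc]
    constructor
    · rintro ⟨h1, _, h3⟩; exact ⟨h1, h3⟩
    · rintro ⟨h1, h2'⟩; exact ⟨h1, lt_of_lt_of_le hy.1 h1, h2'⟩
  rw [hset, Measure.restrict_congr_set Ioc_ae_eq_Icc.symm, KPMaux2 α hα y t hy.1 hy.2.le]

/-- Kendall convolution of a point mass with a measure `μ` (continuous c.d.f. `F`,
reversed Williamson transform `H`): for `v < t`,
`(δ_v ▵_α μ)([0,t)) = Ψ(v/t) F(t) + (1 - Ψ(v/t)) H(t)`, and for `0 < t ≤ v` the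
measure of `[0,t)` is `0`. -/
theorem kendall_pointmass_measure (α : ℝ) (hα : 0 < α)
    (ker : ℝ → Measure ℝ)
    (hker : ∀ z, ker z = ENNReal.ofReal (z ^ α) •
        ((volume.restrict (Set.Ici (1 : ℝ))).withDensity
          fun s => ENNReal.ofReal (2 * α * s ^ (-2 * α - 1))) +
        ENNReal.ofReal (1 - z ^ α) • Measure.dirac (1 : ℝ))
    (K : ℝ → ℝ → Measure ℝ)
    (hK : ∀ x y, K x y = if x ≤ y then Measure.map (fun s => y * s) (ker (x / y))
        else Measure.map (fun s => x * s) (ker (y / x)))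
    (Ψ : ℝ → ℝ) (hΨ : ∀ s, Ψ s = 1 - s ^ α)
    (μ : Measure ℝ) [IsProbabilityMeasure μ] (hμ0 : μ (Set.Iio 0) = 0)
    (hcont : ∀ x : ℝ, μ {x} = 0)
    (F H : ℝ → ℝ) (hF : ∀ s, F s = (μ (Set.Iic s)).toReal)
    (hH : ∀ t, 0 < t → H t = α * t ^ (-α) * ∫ s in Set.Ioc 0 t, s ^ (α - 1) * F s)
    (v : ℝ) (hv : 0 ≤ v) :
    (∀ t, v < t → ((μ.bind fun y => K v y) (Set.Ico 0 t)).toReal =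
        Ψ (v / t) * F t + (1 - Ψ (v / t)) * H t) ∧
      (∀ t, 0 < t → t ≤ v → (μ.bind fun y => K v y) (Set.Ico 0 t) = 0) := by
  have hKm : Measurable fun y => K v y := KPMmeas α ker hker K hK v
  have hae : ∀ᵐ y ∂μ, 0 < y := by
    have h0 : μ (Set.Iic 0) = 0 := by
      have hle : μ (Set.Iic 0) ≤ μ (Set.Iio 0) + μ {0} := by
        rw [← Set.Iio_union_right]; exact measure_union_le _ _
      rw [hμ0, hcont 0, add_zero] at hle
      exact le_antisymm hle (by simp)
    rw [ae_iff, show {y : ℝ | ¬ 0 < y} = Set.Iic 0 from by ext y; simp [not_lt]]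
    exact h0
  constructor
  · -- main formula
    intro t hvt
    have ht : 0 < t := lt_of_le_of_lt hv hvt
    have hta : (0:ℝ) < t^α := Real.rpow_pos_of_pos ht α
    set c : ℝ := (v/t)^α with hc
    have hc0 : 0 ≤ c := Real.rpow_nonneg (by positivity) α
    have hc1 : c ≤ 1 := Real.rpow_le_one (by positivity) ((div_le_one ht).2 hvt.le) hα.le
    have htna : 0 ≤ t^(-α) := Real.rpow_nonneg ht.le _
    -- value of the measure of Ico 0 t
    rw [Measure.bind_apply measurableSet_Ico hKm.aemeasurable]
    have h1 : ∀ᵐ y ∂μ, K v y (Set.Ico 0 t) = (Set.Ioo 0 t).indicator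
        (fun y => ENNReal.ofReal (1-c) + ENNReal.ofReal c *
          (ENNReal.ofReal (t^(-α)) * ENNReal.ofReal (t^α - y^α))) y := by
      filter_upwards [hae] with y hy
      rw [KPMKIco α hα ker hker K hK v y t hv hy ht]
      by_cases hyt : y < t
      · rw [if_pos ⟨hvt, hyt⟩, Set.indicator_of_mem (Set.mem_Ioo.2 ⟨hy, hyt⟩)]
        have hyα : y^α ≤ t^α := Real.rpow_le_rpow hy.le hyt.le hα.le
        have e0 : (v*y/t^2)^α = c * (y^α / t^α) := by
          rw [show v*y/t^2 = (v/t)*(y/t) from by rw [sq]; field_simp,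
            Real.mul_rpow (by positivity) (by positivity), Real.div_rpow hy.le ht.le]
        have e1 : 1 - (v*y/t^2)^α = (1-c) + c * (t^(-α) * (t^α - y^α)) := by
          rw [e0, Real.rpow_neg ht.le]
          field_simp
          ring
        rw [e1, ENNReal.ofReal_add (by linarith)
            (mul_nonneg hc0 (mul_nonneg htna (by linarith))),
          ENNReal.ofReal_mul hc0, ENNReal.ofReal_mul htna]
      · rw [if_neg (fun h => hyt h.2), Set.indicator_of_notMem (fun h => hyt h.2)]
    rw [lintegral_congr_ae h1, lintegral_indicator measurableSet_Ioo,
      lintegral_add_left measurable_const,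
      lintegral_const_mul _ (by fun_prop : Measurable fun y : ℝ =>
        ENNReal.ofReal (t^(-α)) * ENNReal.ofReal (t^α - y^α)),
      lintegral_const_mul _ (by fun_prop : Measurable fun y : ℝ =>
        ENNReal.ofReal (t^α - y^α)),
      ← KPMfub α hα μ hμ0 hcont t ht]
    rw [lintegral_const, Measure.restrict_apply MeasurableSet.univ, Set.univ_inter]
    -- μ (Ioo 0 t) = μ (Iic t)
    have hFt : μ (Set.Ioo 0 t) = μ (Set.Iic t) := by
      refine le_antisymm (measure_mono fun y hy => Set.mem_Iic.2 (le_of_lt (Set.mem_Ioo.1 hy).2)) ?_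
      have hsub : Set.Iic t ⊆ Set.Ioo 0 t ∪ (Set.Iio 0 ∪ {0} ∪ {t}) := by
        intro y hy
        rcases lt_trichotomy y 0 with h | h | h
        · exact Or.inr (Or.inl (Or.inl h))
        · exact Or.inr (Or.inl (Or.inr h))
        · rcases eq_or_lt_of_le (Set.mem_Iic.1 hy) with h2 | h2
          · exact Or.inr (Or.inr h2)
          · exact Or.inl ⟨h, h2⟩
      calc μ (Set.Iic t) ≤ μ (Set.Ioo 0 t ∪ (Set.Iio 0 ∪ {0} ∪ {t})) := measure_mono hsub
        _ ≤ μ (Set.Ioo 0 t) + μ (Set.Iio 0 ∪ {0} ∪ {t}) := measure_union_le _ _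
        _ ≤ μ (Set.Ioo 0 t) + (μ (Set.Iio 0 ∪ {0}) + μ {t}) := by
            gcongr; exact measure_union_le _ _
        _ ≤ μ (Set.Ioo 0 t) + ((μ (Set.Iio 0) + μ {0}) + μ {t}) := by
            gcongr; exact measure_union_le _ _
        _ = μ (Set.Ioo 0 t) := by rw [hμ0, hcont 0, hcont t]; simp
    have hInonneg : 0 ≤ ∫ s in Set.Ioc 0 t, s^(α-1) * (μ (Set.Iic s)).toReal :=
      setIntegral_nonneg measurableSet_Ioc
        (fun s hs => mul_nonneg (Real.rpow_nonneg hs.1.le _) ENNReal.toReal_nonneg)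
    rw [ENNReal.toReal_add
        (ENNReal.mul_ne_top ENNReal.ofReal_ne_top (measure_ne_top μ _))
        (ENNReal.mul_ne_top ENNReal.ofReal_ne_top (ENNReal.mul_ne_top
          ENNReal.ofReal_ne_top ENNReal.ofReal_ne_top)),
      ENNReal.toReal_mul, ENNReal.toReal_mul, ENNReal.toReal_mul,
      ENNReal.toReal_ofReal (by linarith), ENNReal.toReal_ofReal hc0,
      ENNReal.toReal_ofReal htna,
      ENNReal.toReal_ofReal (mul_nonneg hα.le hInonneg)]
    rw [hΨ, hH t ht, hF t, ← hFt]
    have hFs : (fun s => s ^ (α-1) * F s) = fun s => s^(α-1) * (μ (Set.Iic s)).toReal := by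
      funext s; rw [hF]
    rw [hFs]
    ring
  · -- t ≤ v case
    intro t ht htv
    rw [Measure.bind_apply measurableSet_Ico hKm.aemeasurable]
    have h1 : ∀ᵐ y ∂μ, K v y (Set.Ico 0 t) = 0 := by
      filter_upwards [hae] with y hy
      rw [KPMKIco α hα ker hker K hK v y t hv hy ht, if_neg]
      rintro ⟨h1, _⟩
      exact absurd htv (not_le.2 h1)
    rw [lintegral_congr_ae h1, lintegral_zero]
end

section
/- n-step Kendall transition probability: for u < t, (δ_u ▵_α ν^{▵_α n})([0,t)) = J(t)^{n−1}[n(G(t) − J(t))Ψ(u/t) + J(t)], where Ψ(s) = 1 − s^α, G is the c.d.f. of ν and J its reversed Williamson transform; equivalently it equals Ψ(u/t)G_n(t) + (1−Ψ(u/t))J_n(t) with G_n(t) = J(t)^{n−1}[J(t) + n(G(t)−J(t))] and J_n(t) = J(t)^n. -/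
open MeasureTheory Filter Topology Set


lemma measure_Iio_toReal_mono (μ : Measure ℝ) [IsFiniteMeasure μ] :
    Monotone (fun s => (μ (Set.Iio s)).toReal) := fun a b hab =>
  ENNReal.toReal_mono (measure_ne_top μ _) (measure_mono (Set.Iio_subset_Iio hab))

lemma measure_Iic_toReal_mono (μ : Measure ℝ) [IsFiniteMeasure μ] :
    Monotone (fun s => (μ (Set.Iic s)).toReal) := fun a b hab =>
  ENNReal.toReal_mono (measure_ne_top μ _) (measure_mono (Set.Iic_subset_Iic.2 hab))

lemma tendsto_measure_Iio_toReal_left (μ : Measure ℝ) [IsFiniteMeasure μ] (t : ℝ) :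
    Tendsto (fun s => (μ (Set.Iio s)).toReal) (𝓝[<] t) (𝓝 ((μ (Set.Iio t)).toReal)) := by
  have hmono := measure_Iio_toReal_mono μ
  have h := hmono.tendsto_nhdsLT t
  have hbdd : BddAbove ((fun s => (μ (Set.Iio s)).toReal) '' Set.Iio t) := by
    refine ⟨(μ (Set.Iio t)).toReal, ?_⟩
    rintro y ⟨s, hs, rfl⟩
    exact hmono hs.le
  have hsup : sSup ((fun s => (μ (Set.Iio s)).toReal) '' Set.Iio t) = (μ (Set.Iio t)).toReal := by
    refine le_antisymm ?_ ?_
    · refine csSup_le ⟨_, ⟨t - 1, by simp, rfl⟩⟩ ?_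
      rintro y ⟨s, hs, rfl⟩
      exact hmono hs.le
    · -- approximate from below with t - (k+1)⁻¹
      set S : ℕ → Set ℝ := fun k => Set.Iio (t - ((k : ℝ) + 1)⁻¹) with hS
      have hSmono : Monotone S := by
        intro a b hab
        apply Set.Iio_subset_Iio
        have : ((b : ℝ) + 1)⁻¹ ≤ ((a : ℝ) + 1)⁻¹ := by
          apply inv_anti₀ (by positivity) (by exact_mod_cast (by omega : a + 1 ≤ b + 1))
        linarith
      have hUnion : (⋃ k, S k) = Set.Iio t := by
        ext x
        simp only [Set.mem_iUnion, Set.mem_Iio, hS]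
        constructor
        · rintro ⟨k, hk⟩
          have : (0:ℝ) < ((k:ℝ)+1)⁻¹ := by positivity
          linarith
        · intro hx
          obtain ⟨k, hk⟩ := exists_nat_one_div_lt (by linarith : (0:ℝ) < t - x)
          exact ⟨k, by rw [one_div] at hk; linarith⟩
      have htend := tendsto_measure_iUnion_atTop (μ := μ) hSmono
      rw [hUnion] at htend
      have htoReal : Tendsto (fun k => (μ (S k)).toReal) atTop (𝓝 ((μ (Set.Iio t)).toReal)) :=
        (ENNReal.tendsto_toReal (measure_ne_top μ _)).comp htend
      refine le_of_tendsto htoReal (Eventually.of_forall fun k => ?_)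
      refine le_csSup hbdd ⟨t - ((k : ℝ) + 1)⁻¹, ?_, rfl⟩
      have : (0:ℝ) < ((k:ℝ)+1)⁻¹ := by positivity
      simp only [Set.mem_Iio]; linarith
  rwa [hsup] at h


lemma tendsto_measure_Iic_toReal_right (μ : Measure ℝ) [IsFiniteMeasure μ] (t : ℝ) :
    Tendsto (fun s => (μ (Set.Iic s)).toReal) (𝓝[>] t) (𝓝 ((μ (Set.Iic t)).toReal)) := by
  have hmono := measure_Iic_toReal_mono μ
  have h := hmono.tendsto_nhdsGT t
  have hbdd : BddBelow ((fun s => (μ (Set.Iic s)).toReal) '' Set.Ioi t) := by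
    refine ⟨(μ (Set.Iic t)).toReal, ?_⟩
    rintro y ⟨s, hs, rfl⟩
    exact hmono hs.le
  have hinf : sInf ((fun s => (μ (Set.Iic s)).toReal) '' Set.Ioi t) = (μ (Set.Iic t)).toReal := by
    refine le_antisymm ?_ ?_
    · set S : ℕ → Set ℝ := fun k => Set.Iic (t + ((k : ℝ) + 1)⁻¹) with hS
      have hSanti : Antitone S := by
        intro a b hab
        apply Set.Iic_subset_Iic.2
        have : ((b : ℝ) + 1)⁻¹ ≤ ((a : ℝ) + 1)⁻¹ := by
          apply inv_anti₀ (by positivity) (by exact_mod_cast (by omega : a + 1 ≤ b + 1))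
        linarith
      have hInter : (⋂ k, S k) = Set.Iic t := by
        ext x
        simp only [Set.mem_iInter, Set.mem_Iic, hS]
        constructor
        · intro hx
          by_contra hxt
          push_neg at hxt
          obtain ⟨k, hk⟩ := exists_nat_one_div_lt (by linarith : (0:ℝ) < x - t)
          rw [one_div] at hk
          have := hx k
          linarith
        · intro hx k
          have : (0:ℝ) < ((k:ℝ)+1)⁻¹ := by positivity
          linarith
      have htend := MeasureTheory.tendsto_measure_iInter_atTop (μ := μ)
        (fun k => (measurableSet_Iic).nullMeasurableSet) hSanti ⟨0, measure_ne_top μ _⟩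
      rw [hInter] at htend
      have htoReal : Tendsto (fun k => (μ (S k)).toReal) atTop (𝓝 ((μ (Set.Iic t)).toReal)) :=
        (ENNReal.tendsto_toReal (measure_ne_top μ _)).comp htend
      refine ge_of_tendsto htoReal (Eventually.of_forall fun k => ?_)
      refine csInf_le hbdd ⟨t + ((k : ℝ) + 1)⁻¹, ?_, rfl⟩
      have : (0:ℝ) < ((k:ℝ)+1)⁻¹ := by positivity
      simp only [Set.mem_Ioi]; linarith
    · refine le_csInf ⟨_, ⟨t + 1, by simp, rfl⟩⟩ ?_
      rintro y ⟨s, hs, rfl⟩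
      exact hmono hs.le
  rwa [hinf] at h

lemma cdf_continuousAt (μ : Measure ℝ) [IsFiniteMeasure μ] (hcont : ∀ x : ℝ, μ {x} = 0)
    (t : ℝ) : ContinuousAt (fun s => (μ (Set.Iic s)).toReal) t := by
  have hIioIic : ∀ x : ℝ, μ (Set.Iio x) = μ (Set.Iic x) := fun x =>
    measure_congr (MeasureTheory.Iio_ae_eq_Iic' (hcont x))
  rw [continuousAt_iff_continuous_left_right]
  constructor
  · -- left: within Iic t; reduce to Iio t
    rw [← continuousWithinAt_Iio_iff_Iic]
    have hlow := tendsto_measure_Iio_toReal_left μ t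
    have : Tendsto (fun s => (μ (Set.Iic s)).toReal) (𝓝[<] t) (𝓝 ((μ (Set.Iio t)).toReal)) := by
      refine tendsto_of_tendsto_of_tendsto_of_le_of_le' hlow tendsto_const_nhds ?_ ?_
      · exact Eventually.of_forall fun s =>
          ENNReal.toReal_mono (measure_ne_top μ _) (measure_mono Set.Iio_subset_Iic_self)
      · filter_upwards [self_mem_nhdsWithin] with s hs
        exact ENNReal.toReal_mono (measure_ne_top μ _)
          (measure_mono (Set.Iic_subset_Iio.2 hs))
    show Tendsto _ (𝓝[<] t) (𝓝 ((μ (Set.Iic t)).toReal))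
    rwa [← hIioIic t]
  · rw [← continuousWithinAt_Ioi_iff_Ici]
    show Tendsto _ (𝓝[>] t) (𝓝 ((μ (Set.Iic t)).toReal))
    exact tendsto_measure_Iic_toReal_right μ t


lemma rescale_max (α : ℝ) (hα : 0 < α) (t : ℝ) (ht : 0 < t) (s : ℝ) (hs : 0 ≤ s) :
    max (1 - (t⁻¹ * s) ^ α) 0 = t ^ (-α) * max (t ^ α - s ^ α) 0 := by
  have h1 : (t⁻¹ * s) ^ α = t ^ (-α) * s ^ α := by
    rw [Real.mul_rpow (inv_nonneg.2 ht.le) hs, Real.inv_rpow ht.le, ← Real.rpow_neg ht.le]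
  have h2 : t ^ (-α) * t ^ α = 1 := by
    rw [← Real.rpow_add ht]; simp
  have hpos : (0:ℝ) ≤ t ^ (-α) := (Real.rpow_pos_of_pos ht (-α)).le
  rw [mul_max_of_nonneg _ _ hpos, mul_zero, mul_sub, h2, h1]

lemma key_layercake (μ : Measure ℝ) [IsFiniteMeasure μ] (hμ0 : μ (Set.Iio 0) = 0)
    (α : ℝ) (hα : 0 < α) (t : ℝ) (ht : 0 < t) :
    ∫ s, max (t ^ α - s ^ α) 0 ∂μ
      = ∫ v in Set.Ioc 0 t, α * v ^ (α - 1) * (μ (Set.Iio v)).toReal := by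
  have hae : ∀ᵐ s ∂μ, 0 ≤ s := by
    refine (ae_iff).2 ?_
    convert hμ0 using 2
    ext x; simp [not_le]
  have hm : Measurable (fun s : ℝ => max (t ^ α - s ^ α) 0) :=
    (measurable_const.sub (measurable_id.pow_const α)).max measurable_const
  set g : ℝ → ENNReal := fun v => ENNReal.ofReal (α * v ^ (α - 1)) with hg
  have hpt : ∀ s : ℝ, 0 ≤ s → ENNReal.ofReal (max (t ^ α - s ^ α) 0)
      = ∫⁻ v in Set.Ioc 0 t, (Set.Ioi s).indicator g v := by
    intro s hs
    rw [lintegral_indicator measurableSet_Ioi, Measure.restrict_restrict measurableSet_Ioi]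
    have hset : Set.Ioi s ∩ Set.Ioc 0 t = Set.Ioc s t := by
      ext v
      simp only [Set.mem_inter_iff, Set.mem_Ioi, Set.mem_Ioc]
      exact ⟨fun ⟨h1, _, h3⟩ => ⟨h1, h3⟩, fun ⟨h1, h3⟩ => ⟨h1, lt_of_le_of_lt hs h1, h3⟩⟩
    rw [hset]
    by_cases hst : s ≤ t
    · have hint : IntegrableOn (fun v => α * v ^ (α - 1)) (Set.Ioc s t) volume := by
        have h := (intervalIntegral.intervalIntegrable_rpow' (by linarith : (-1:ℝ) < α - 1) (a := s) (b := t))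
        rw [intervalIntegrable_iff_integrableOn_Ioc_of_le hst] at h
        exact h.const_mul α
      rw [← MeasureTheory.ofReal_integral_eq_lintegral_ofReal hint ?_]
      · congr 1
        have hval : ∫ v in Set.Ioc s t, α * v ^ (α - 1) = t ^ α - s ^ α := by
          rw [← intervalIntegral.integral_of_le hst, intervalIntegral.integral_const_mul,
            integral_rpow (Or.inl (by linarith : (-1:ℝ) < α - 1))]
          have hsum : α - 1 + 1 = α := by ring
          rw [hsum]
          field_simp
        rw [hval, max_eq_left (sub_nonneg.2 (Real.rpow_le_rpow hs hst hα.le))]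
      · filter_upwards [ae_restrict_mem measurableSet_Ioc] with v hv
        exact mul_nonneg hα.le (Real.rpow_nonneg (le_of_lt (lt_of_le_of_lt hs hv.1)) _)
    · push_neg at hst
      rw [Set.Ioc_eq_empty (not_lt.2 hst.le)]
      rw [max_eq_right (sub_nonpos.2 (Real.rpow_le_rpow ht.le hst.le hα.le)), ENNReal.ofReal_zero]
      simp
  have hmeas_unc : Measurable (Function.uncurry fun s v => (Set.Ioi s).indicator g v) := by
    have heq : (Function.uncurry fun s v => (Set.Ioi s).indicator g v)
        = Set.indicator {p : ℝ × ℝ | p.1 < p.2} (fun p => g p.2) := by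
      funext p
      by_cases h : p.1 < p.2 <;> simp [Function.uncurry, Set.indicator, h, Set.mem_Ioi]
    rw [heq]
    refine Measurable.indicator ?_ (measurableSet_lt measurable_fst measurable_snd)
    exact ENNReal.measurable_ofReal.comp
      ((measurable_const.mul (measurable_snd.pow_const (α - 1))))
  have hmono : Monotone (fun v : ℝ => μ (Set.Iio v)) :=
    fun a b hab => measure_mono (Set.Iio_subset_Iio hab)
  calc ∫ s, max (t ^ α - s ^ α) 0 ∂μ
      = (∫⁻ s, ENNReal.ofReal (max (t ^ α - s ^ α) 0) ∂μ).toReal :=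
        integral_eq_lintegral_of_nonneg_ae (Eventually.of_forall fun s => le_max_right _ _)
          hm.aestronglyMeasurable
    _ = (∫⁻ s, ∫⁻ v in Set.Ioc 0 t, (Set.Ioi s).indicator g v ∂volume ∂μ).toReal := by
        congr 1
        refine lintegral_congr_ae ?_
        filter_upwards [hae] with s hs
        exact hpt s hs
    _ = (∫⁻ v in Set.Ioc 0 t, ∫⁻ s, (Set.Ioi s).indicator g v ∂μ ∂volume).toReal := by
        congr 1
        exact lintegral_lintegral_swap hmeas_unc.aemeasurable
    _ = (∫⁻ v in Set.Ioc 0 t, g v * μ (Set.Iio v) ∂volume).toReal := by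
        congr 1
        refine lintegral_congr fun v => ?_
        have heq : (fun s => (Set.Ioi s).indicator g v)
            = Set.indicator (Set.Iio v) (fun _ => g v) := by
          funext s
          by_cases h : s < v <;> simp [Set.indicator, h, Set.mem_Ioi, Set.mem_Iio]
        rw [heq, lintegral_indicator measurableSet_Iio, setLIntegral_const]
    _ = ∫ v in Set.Ioc 0 t, (g v * μ (Set.Iio v)).toReal := by
        refine (MeasureTheory.integral_toReal ?_ ?_).symm
        · exact ((ENNReal.measurable_ofReal.comp
            (measurable_const.mul (measurable_id.pow_const (α - 1)))).mul
            (hmono.measurable)).aemeasurable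
        · filter_upwards with v
          exact ENNReal.mul_lt_top ENNReal.ofReal_lt_top (measure_lt_top μ _)
    _ = ∫ v in Set.Ioc 0 t, α * v ^ (α - 1) * (μ (Set.Iio v)).toReal := by
        refine setIntegral_congr_fun measurableSet_Ioc fun v hv => ?_
        rw [ENNReal.toReal_mul, ENNReal.toReal_ofReal (mul_nonneg hα.le (Real.rpow_nonneg hv.1.le _))]

lemma williamson_eq (μ : Measure ℝ) [IsFiniteMeasure μ] (hμ0 : μ (Set.Iio 0) = 0)
    (α : ℝ) (hα : 0 < α) (t : ℝ) (ht : 0 < t) :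
    ∫ s, max (1 - (t⁻¹ * s) ^ α) 0 ∂μ
      = α * t ^ (-α) * ∫ v in Set.Ioc 0 t, v ^ (α - 1) * (μ (Set.Iio v)).toReal := by
  have hae : ∀ᵐ s ∂μ, 0 ≤ s := by
    refine (ae_iff).2 ?_
    convert hμ0 using 2
    ext x; simp [not_le]
  have h1 : ∫ s, max (1 - (t⁻¹ * s) ^ α) 0 ∂μ = ∫ s, t ^ (-α) * max (t ^ α - s ^ α) 0 ∂μ := by
    refine integral_congr_ae ?_
    filter_upwards [hae] with s hs
    exact rescale_max α hα t ht s hs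
  rw [h1, integral_const_mul, key_layercake μ hμ0 α hα t ht, ← integral_const_mul,
    ← integral_const_mul]
  refine setIntegral_congr_fun measurableSet_Ioc fun v hv => ?_
  ring


-- axioms standing in for already-proven lemmas
/-- n-step Kendall transition probability: if `ρ = δ_u ▵_α ν^{▵_α n}` (characterized by
its Williamson transform `(1-(tu)^α)_+ Φ_ν(t)^n`), then for `u < t`,
`ρ([0,t)) = J(t)^{n-1}[n(G(t)-J(t)) Ψ(u/t) + J(t)]
  = Ψ(u/t) G_n(t) + (1-Ψ(u/t)) J_n(t)` with `G_n = J^{n-1}[J + n(G-J)]`, `J_n = J^n`. -/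
theorem kendall_n_step (α : ℝ) (hα : 0 < α) (n : ℕ) (hn : 1 ≤ n)
    (ν : Measure ℝ) [IsProbabilityMeasure ν] (hν0 : ν (Set.Iio 0) = 0)
    (hνcont : ∀ x : ℝ, ν {x} = 0)
    (G J : ℝ → ℝ) (hG : ∀ s, G s = (ν (Set.Iic s)).toReal)
    (hJ : ∀ t, 0 < t → J t = α * t ^ (-α) * ∫ s in Set.Ioc 0 t, s ^ (α - 1) * G s)
    (Ψ : ℝ → ℝ) (hΨ : ∀ s, Ψ s = 1 - s ^ α)
    (u : ℝ) (hu : 0 ≤ u)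
    (ρ : Measure ℝ) [IsProbabilityMeasure ρ] (hρ0 : ρ (Set.Iio 0) = 0)
    (hρ : ∀ t, 0 < t → ∫ s, max (1 - (t * s) ^ α) 0 ∂ρ =
        max (1 - (t * u) ^ α) 0 * (∫ s, max (1 - (t * s) ^ α) 0 ∂ν) ^ n) :
    ∀ t, u < t →
      ((ρ (Set.Ico 0 t)).toReal =
          J t ^ (n - 1) * (n * (G t - J t) * Ψ (u / t) + J t)) ∧
        ((ρ (Set.Ico 0 t)).toReal =
          Ψ (u / t) * (J t ^ (n - 1) * (J t + n * (G t - J t))) +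
            (1 - Ψ (u / t)) * J t ^ n) := by
  intro t hut
  have ht : 0 < t := lt_of_le_of_lt hu hut
  obtain ⟨m, rfl⟩ : ∃ m, n = m + 1 := ⟨n - 1, by omega⟩
  -- J is the Williamson transform of ν
  have hJW : ∀ x : ℝ, 0 < x → J x = ∫ s, max (1 - (x⁻¹ * s) ^ α) 0 ∂ν := by
    intro x hx
    rw [williamson_eq ν hν0 α hα x hx, hJ x hx]
    congr 1
    refine setIntegral_congr_fun measurableSet_Ioc fun v _ => ?_
    rw [hG v, measure_congr (MeasureTheory.Iio_ae_eq_Iic' (hνcont v))]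
  have haeρ : ∀ᵐ s ∂ρ, 0 ≤ s := by
    refine (ae_iff).2 ?_
    convert hρ0 using 2
    ext x; simp [not_le]
  -- the rescaled Williamson transform of ρ
  have hW : ∀ x : ℝ, 0 < x →
      ∫ s, max (x ^ α - s ^ α) 0 ∂ρ = max (x ^ α - u ^ α) 0 * J x ^ (m + 1) := by
    intro x hx
    have h1 := hρ x⁻¹ (inv_pos.2 hx)
    have hL : ∫ s, max (1 - (x⁻¹ * s) ^ α) 0 ∂ρ
        = x ^ (-α) * ∫ s, max (x ^ α - s ^ α) 0 ∂ρ := by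
      rw [← integral_const_mul]
      refine integral_congr_ae ?_
      filter_upwards [haeρ] with s hs
      exact rescale_max α hα x hx s hs
    rw [hL, rescale_max α hα x hx u hu, ← hJW x hx] at h1
    have hxne : x ^ (-α) ≠ 0 := ne_of_gt (Real.rpow_pos_of_pos hx _)
    exact mul_left_cancel₀ hxne (h1.trans (mul_assoc _ _ _))
  -- basic facts about G
  have hGmono : Monotone G := by
    intro a b hab
    rw [hG a, hG b]
    exact ENNReal.toReal_mono (measure_ne_top ν _) (measure_mono (Set.Iic_subset_Iic.2 hab))
  have hGmeas : Measurable G := hGmono.measurable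
  have hGnn : ∀ v, 0 ≤ G v := fun v => by rw [hG v]; exact ENNReal.toReal_nonneg
  have hGle : ∀ v, G v ≤ 1 := fun v => by
    rw [hG v]
    calc (ν (Set.Iic v)).toReal ≤ (1 : ENNReal).toReal :=
      ENNReal.toReal_mono ENNReal.one_ne_top prob_le_one
    _ = 1 := by simp
  have hGcont : ContinuousAt G t := by
    have h := cdf_continuousAt ν hνcont t
    have hGeq : G = fun s => (ν (Set.Iic s)).toReal := funext hG
    rw [hGeq]; exact h
  -- FTC : derivative of M
  set M : ℝ → ℝ := fun x => ∫ v in Set.Ioc 0 x, v ^ (α - 1) * G v with hM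
  have hfint : ∀ a b : ℝ, IntervalIntegrable (fun v => v ^ (α - 1) * G v) volume a b := by
    intro a b
    refine (intervalIntegral.intervalIntegrable_rpow' (by linarith : (-1:ℝ) < α - 1)).mono_fun
      ((measurable_id.pow_const (α - 1)).mul hGmeas).aestronglyMeasurable ?_
    refine Eventually.of_forall fun v => ?_
    simp only [Real.norm_eq_abs, abs_mul]
    exact mul_le_of_le_one_right (abs_nonneg _) (abs_le.2 ⟨by linarith [hGnn v], hGle v⟩)
  have hMderiv : HasDerivAt M (t ^ (α - 1) * G t) t := by
    have hd := intervalIntegral.integral_hasDerivAt_right (hfint 0 t)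
      ⟨Set.univ, Filter.univ_mem,
        ((measurable_id.pow_const (α - 1)).mul hGmeas).aestronglyMeasurable⟩
      ((Real.continuousAt_rpow_const t (α - 1) (Or.inl (ne_of_gt ht))).mul hGcont)
    refine hd.congr_of_eventuallyEq ?_
    filter_upwards [eventually_gt_nhds ht] with x hx
    rw [hM]
    exact (intervalIntegral.integral_of_le hx.le).symm
  -- derivative of the closed form
  have hMt : α * t ^ (-α) * M t = J t := (hJ t ht).symm
  have hA : (t:ℝ) ^ α ≠ 0 := ne_of_gt (Real.rpow_pos_of_pos ht α)
  have hMtval : M t = t ^ α * J t / α := by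
    rw [← hMt, Real.rpow_neg ht.le]
    field_simp
  have hjd : HasDerivAt (fun x => α * x ^ (-α) * M x)
      (α * (-α * t ^ (-α - 1)) * M t + α * t ^ (-α) * (t ^ (α - 1) * G t)) t := by
    have h1 : HasDerivAt (fun x : ℝ => x ^ (-α)) (-α * t ^ (-α - 1)) t :=
      Real.hasDerivAt_rpow_const (Or.inl (ne_of_gt ht))
    have h2 := (h1.const_mul α).mul hMderiv
    exact h2
  have hpowd : HasDerivAt (fun x : ℝ => x ^ α - u ^ α) (α * t ^ (α - 1)) t :=
    (Real.hasDerivAt_rpow_const (Or.inl (ne_of_gt ht))).sub_const _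
  have hKd := hpowd.mul (hjd.pow (m + 1))
  set kd : ℝ := α * t ^ (α - 1) * (α * t ^ (-α) * M t) ^ (m + 1)
      + (t ^ α - u ^ α) * (↑(m + 1) * (α * t ^ (-α) * M t) ^ (m + 1 - 1)
        * (α * (-α * t ^ (-α - 1)) * M t + α * t ^ (-α) * (t ^ (α - 1) * G t))) with hkd
  set Kf : ℝ → ℝ := fun x => (x ^ α - u ^ α) * J x ^ (m + 1) with hKf
  have hKt : HasDerivAt Kf kd t := by
    refine HasDerivAt.congr_of_eventuallyEq hKd ?_
    filter_upwards [eventually_gt_nhds ht] with x hx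
    simp only [hKf, hM]
    rw [hJ x hx]
    rfl
  -- key algebraic identity
  set T : ℝ := J t ^ m * ((↑(m + 1) : ℝ) * (G t - J t) * (1 - (u / t) ^ α) + J t) with hT
  have hkdT : kd = α * t ^ (α - 1) * T := by
    have hdivt : (u / t) ^ α = u ^ α / t ^ α := Real.div_rpow hu ht.le α
    have hta : t ^ (-α - 1) = (t ^ α)⁻¹ * t⁻¹ := by
      rw [show (-α - 1) = -α + (-1) by ring, Real.rpow_add ht, Real.rpow_neg_one,
        Real.rpow_neg ht.le]
    have htb : t ^ (α - 1) = t ^ α * t⁻¹ := by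
      rw [show (α - 1) = α + (-1) by ring, Real.rpow_add ht, Real.rpow_neg_one]
    rw [hkd, hT, hdivt, hta, htb, Real.rpow_neg ht.le, hMtval, Nat.add_sub_cancel]
    field_simp
    ring
  -- squeeze bounds
  set F : ℝ → ℝ := fun x => (ρ (Set.Iio x)).toReal with hF
  have hintρ : ∀ x : ℝ, 0 < x → Integrable (fun s => max (x ^ α - s ^ α) 0) ρ := by
    intro x hx
    refine Integrable.mono' (integrable_const (x ^ α))
      ((measurable_const.sub (measurable_id.pow_const α)).max
        measurable_const).aestronglyMeasurable ?_
    filter_upwards [haeρ] with s hs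
    rw [Real.norm_eq_abs, abs_of_nonneg (le_max_right _ _)]
    exact max_le (by linarith [Real.rpow_nonneg hs α]) (Real.rpow_pos_of_pos hx α).le
  have hsq : ∀ s', s' ∈ Set.Ioo u t →
      F s' * (t ^ α - s' ^ α) ≤ Kf t - Kf s' ∧ Kf t - Kf s' ≤ F t * (t ^ α - s' ^ α) := by
    intro s' hs'
    have hs'0 : 0 < s' := lt_of_le_of_lt hu hs'.1
    have hW1 : ∫ s, max (t ^ α - s ^ α) 0 ∂ρ = Kf t := by
      rw [hW t ht, hKf, max_eq_left (sub_nonneg.2 (Real.rpow_le_rpow hu hut.le hα.le))]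
    have hW2 : ∫ s, max (s' ^ α - s ^ α) 0 ∂ρ = Kf s' := by
      rw [hW s' hs'0, hKf, max_eq_left (sub_nonneg.2 (Real.rpow_le_rpow hu hs'.1.le hα.le))]
    rw [← hW1, ← hW2, ← integral_sub (hintρ t ht) (hintρ s' hs'0)]
    constructor
    · have hlow : ∫ s, Set.indicator (Set.Iio s') (fun _ => t ^ α - s' ^ α) s ∂ρ
          = F s' * (t ^ α - s' ^ α) := by
        rw [integral_indicator_const _ measurableSet_Iio, smul_eq_mul, hF]
        rfl
      rw [← hlow]
      refine integral_mono_ae ((integrable_const _).indicator measurableSet_Iio)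
        ((hintρ t ht).sub (hintρ s' hs'0)) ?_
      filter_upwards [haeρ] with s hs
      by_cases hcase : s < s'
      · rw [Set.indicator_of_mem (Set.mem_Iio.2 hcase)]
        have h1 : s ^ α ≤ s' ^ α := Real.rpow_le_rpow hs hcase.le hα.le
        have h2 : s ^ α ≤ t ^ α := Real.rpow_le_rpow hs (by linarith [hs'.2]) hα.le
        rw [max_eq_left (by linarith : (0:ℝ) ≤ t ^ α - s ^ α),
          max_eq_left (by linarith : (0:ℝ) ≤ s' ^ α - s ^ α)]
        linarith
      · rw [Set.indicator_of_notMem (by simpa using hcase)]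
        have h1 : s' ^ α ≤ s ^ α := Real.rpow_le_rpow hs'0.le (not_lt.1 hcase) hα.le
        rw [max_eq_right (by linarith : s' ^ α - s ^ α ≤ 0)]
        have := le_max_right (t ^ α - s ^ α) (0:ℝ)
        linarith
    · have hup : ∫ s, Set.indicator (Set.Iio t) (fun _ => t ^ α - s' ^ α) s ∂ρ
          = F t * (t ^ α - s' ^ α) := by
        rw [integral_indicator_const _ measurableSet_Iio, smul_eq_mul, hF]
        rfl
      rw [← hup]
      refine integral_mono_ae ((hintρ t ht).sub (hintρ s' hs'0))
        ((integrable_const _).indicator measurableSet_Iio) ?_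
      filter_upwards [haeρ] with s hs
      by_cases hcase : s < t
      · rw [Set.indicator_of_mem (Set.mem_Iio.2 hcase),
          max_eq_left (sub_nonneg.2 (Real.rpow_le_rpow hs hcase.le hα.le))]
        have h3 := le_max_left (s' ^ α - s ^ α) (0:ℝ)
        linarith
      · rw [Set.indicator_of_notMem (by simpa using hcase)]
        have h1 : t ^ α ≤ s ^ α := Real.rpow_le_rpow ht.le (not_lt.1 hcase) hα.le
        have h2 : s' ^ α ≤ t ^ α := Real.rpow_le_rpow hs'0.le hs'.2.le hα.le
        rw [max_eq_right (by linarith : t ^ α - s ^ α ≤ 0),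
          max_eq_right (by linarith : s' ^ α - s ^ α ≤ 0)]
        simp
  -- slope limit
  have hPd : HasDerivAt (fun x : ℝ => x ^ α) (α * t ^ (α - 1)) t :=
    Real.hasDerivAt_rpow_const (Or.inl ht.ne')
  have hsubf : 𝓝[<] t ≤ 𝓝[{t}ᶜ] t := nhdsWithin_mono t fun x hx => ne_of_lt hx
  have hαπ : α * t ^ (α - 1) ≠ 0 := ne_of_gt (mul_pos hα (Real.rpow_pos_of_pos ht _))
  have hQ := ((hasDerivAt_iff_tendsto_slope.1 hKt).mono_left hsubf).div
    ((hasDerivAt_iff_tendsto_slope.1 hPd).mono_left hsubf) hαπ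
  have hmemIoo : Set.Ioo u t ∈ 𝓝[<] t := Ioo_mem_nhdsLT_of_mem ⟨hut, le_refl t⟩
  have hQtend : Tendsto (fun s' => (Kf t - Kf s') / (t ^ α - s' ^ α)) (𝓝[<] t) (𝓝 T) := by
    have hlim : kd / (α * t ^ (α - 1)) = T := by
      rw [hkdT, mul_div_cancel_left₀ _ hαπ]
    rw [← hlim]
    refine hQ.congr' ?_
    filter_upwards [hmemIoo, self_mem_nhdsWithin] with s' hs' hlt
    have hs'0 : 0 < s' := lt_of_le_of_lt hu hs'.1
    have hne : s' - t ≠ 0 := sub_ne_zero.2 (ne_of_lt hs'.2)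
    have hpa : s' ^ α < t ^ α := Real.rpow_lt_rpow hs'0.le hs'.2 hα
    have hne2 : s' ^ α - t ^ α ≠ 0 := sub_ne_zero.2 (ne_of_lt hpa)
    show slope Kf t s' / slope (fun x : ℝ => x ^ α) t s' = (Kf t - Kf s') / (t ^ α - s' ^ α)
    rw [slope_def_field, slope_def_field, div_div_div_cancel_right₀ hne,
      ← neg_sub (Kf s') (Kf t), ← neg_sub (s' ^ α) (t ^ α), neg_div_neg_eq]
  have hQtendF : Tendsto F (𝓝[<] t) (𝓝 (F t)) := tendsto_measure_Iio_toReal_left ρ t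
  have h1 : T ≤ F t := by
    refine le_of_tendsto hQtend ?_
    filter_upwards [hmemIoo] with s' hs'
    have hs'0 : 0 < s' := lt_of_le_of_lt hu hs'.1
    have hpa : s' ^ α < t ^ α := Real.rpow_lt_rpow hs'0.le hs'.2 hα
    exact (div_le_iff₀ (by linarith)).2 ((hsq s' hs').2)
  have h2 : F t ≤ T := by
    refine le_of_tendsto_of_tendsto hQtendF hQtend ?_
    filter_upwards [hmemIoo] with s' hs'
    have hs'0 : 0 < s' := lt_of_le_of_lt hu hs'.1
    have hpa : s' ^ α < t ^ α := Real.rpow_lt_rpow hs'0.le hs'.2 hα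
    exact (le_div_iff₀ (by linarith)).2 ((hsq s' hs').1)
  have hFT : F t = T := le_antisymm h2 h1
  have hIco : (ρ (Set.Ico 0 t)).toReal = F t := by
    rw [hF]
    congr 1
    rw [← Set.Iio_union_Ico_eq_Iio ht.le,
      measure_union (by rw [Set.disjoint_left]; intro a ha ha2; exact absurd ha2.1 (not_le.2 ha)) measurableSet_Ico, hρ0, zero_add]
  constructor
  · rw [hIco, hFT, hT, hΨ, Nat.add_sub_cancel]
  · rw [hIco, hFT, hT, hΨ]
    push_cast
    ring
end
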